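/- arXiv:2102.01426 — 3 statements merged into one kernel-verified Lean document; each statement's English description precedes it below -/
import Mathlib

section
/- Let V be a congruence distributive variety of algebras over an algebraic first-order language L that has the compact intersection property. For any finite set of variables x̄ and conjunctions of equations φ₁(x̄), φ₂(x̄), there exists a conjunction of equations π(x̄) such that for every equation ε(x̄,ȳ): V ⊨ (φ₁ ∨ φ₂) → ε if, and only if, V ⊨ π → ε. -/
namespace Paper

open FirstOrder FirstOrder.Language FirstOrder.Language.Structure

universe u

/-- A bundled algebra: an `L`-structure with carrier in `Type u`. -/
structure Alg (L : FirstOrder.Language.{u, u}) : Type (u + 1) where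
  carrier : Type u
  [str : L.Structure carrier]

attribute [instance] Alg.str

variable {L : FirstOrder.Language.{u, u}}

/-- The direct product of a family of `L`-structures. -/
instance piStructure {ι : Type u} (M : ι → Type u) [∀ i, L.Structure (M i)] :
    L.Structure (∀ i, M i) where
  funMap f x i := funMap f fun j => x j i
  RelMap r x := ∀ i, RelMap r fun j => x j i

/-- An equation `s ≈ t` holds in `M` under the assignment `v`. -/
def EqHolds {α : Type} {M : Type u} [L.Structure M]
    (ε : L.Term α × L.Term α) (v : α → M) : Prop :=
  ε.1.realize v = ε.2.realize v

/-- A (finite) conjunction of equations holds under the assignment `v`. -/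
def ConjHolds {α : Type} {M : Type u} [L.Structure M]
    (c : List (L.Term α × L.Term α)) (v : α → M) : Prop :=
  ∀ ε ∈ c, EqHolds ε v

/-- A (finite) conjunction of negated equations holds under the assignment `v`. -/
def NegConjHolds {α : Type} {M : Type u} [L.Structure M]
    (c : List (L.Term α × L.Term α)) (v : α → M) : Prop :=
  ∀ ε ∈ c, ¬ EqHolds ε v

/-- The first-order theory of a class of algebras. -/
def theoryOf (K : Set (Alg L)) : L.Theory :=
  {φ | ∀ A ∈ K, A.carrier ⊨ φ}

/-- A sentence is universal if it is the universal closure of a quantifier-free formula. -/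
def IsUniversalSentence (φ : L.Sentence) : Prop :=
  ∃ (n : ℕ) (ψ : L.BoundedFormula Empty n), ψ.IsQF ∧ φ = ψ.alls

/-- Semantic entailment of a sentence from a theory. -/
def Entails (T : L.Theory) (φ : L.Sentence) : Prop :=
  ∀ (M : Type u) [L.Structure M] [Nonempty M], M ⊨ T → M ⊨ φ

/-- Two theories are co-theories when they entail the same universal sentences. -/
def AreCotheories (T T' : L.Theory) : Prop :=
  ∀ φ : L.Sentence, IsUniversalSentence φ → (Entails T φ ↔ Entails T' φ)

/-- A theory is model complete when every embedding between its models is elementary. -/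
def IsModelComplete (T : L.Theory) : Prop :=
  ∀ (M N : Type u) [L.Structure M] [L.Structure N] [Nonempty M] [Nonempty N],
    M ⊨ T → N ⊨ T → ∀ (f : M ↪[L] N) (n : ℕ) (φ : L.Formula (Fin n)) (v : Fin n → M),
      φ.Realize (f ∘ v) ↔ φ.Realize v

/-- `T'` is a model companion of `T`. -/
def IsModelCompanion (T T' : L.Theory) : Prop :=
  IsModelComplete T' ∧ AreCotheories T T'

/-- The (quantifier-free) diagram of a structure: all quantifier-free sentences with
parameters from `M` that hold in `M`. -/
def diagram (L : FirstOrder.Language.{u, u}) (M : Type u) [L.Structure M] :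
    (L[[M]]).Theory :=
  {φ | BoundedFormula.IsQF φ ∧ M ⊨ φ}

/-- `T'` is a model completion of `T`: a model companion such that, for every model `M` of `T`,
`T'` together with the diagram of `M` is complete. -/
def IsModelCompletion (T T' : L.Theory) : Prop :=
  IsModelCompanion T T' ∧
    ∀ (M : Type u) [L.Structure M] [Nonempty M], M ⊨ T →
      Theory.IsComplete ((L.lhomWithConstants M).onTheory T' ∪ diagram L M)

/-- The theory of the class `K` has a model completion. -/
def HasModelCompletion (K : Set (Alg L)) : Prop :=
  ∃ T' : L.Theory, IsModelCompletion (theoryOf K) T'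

/-- `K` is a universal class: it is closed under isomorphisms, substructures and ultraproducts. -/
def IsUniversalClass (K : Set (Alg L)) : Prop :=
  (∀ A ∈ K, ∀ (N : Type u) [L.Structure N], Nonempty (A.carrier ≃[L] N) → Alg.mk N ∈ K) ∧
  (∀ A ∈ K, ∀ S : L.Substructure A.carrier, Alg.mk (↥S) ∈ K) ∧
  (∀ (ι : Type u) (F : Ultrafilter ι) (M : ι → Type u) [∀ i, L.Structure (M i)],
      (∀ i, Alg.mk (M i) ∈ K) → Alg.mk ((F : Filter ι).Product M) ∈ K)

/-- `K` is a variety: it is closed under homomorphic images, substructures and products. -/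
def IsVariety (K : Set (Alg L)) : Prop :=
  (∀ A ∈ K, ∀ (N : Type u) [L.Structure N] (f : A.carrier →[L] N),
      Function.Surjective ⇑f → Alg.mk N ∈ K) ∧
  (∀ A ∈ K, ∀ S : L.Substructure A.carrier, Alg.mk (↥S) ∈ K) ∧
  (∀ (ι : Type u) (M : ι → Type u) [∀ i, L.Structure (M i)],
      (∀ i, Alg.mk (M i) ∈ K) → Alg.mk (∀ i, M i) ∈ K)

/-- The amalgamation property. -/
def Amalgamation (K : Set (Alg L)) : Prop :=
  ∀ A ∈ K, ∀ B ∈ K, ∀ C ∈ K,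
    ∀ (f : A.carrier ↪[L] B.carrier) (g : A.carrier ↪[L] C.carrier),
      ∃ D ∈ K, ∃ (h : B.carrier ↪[L] D.carrier) (k : C.carrier ↪[L] D.carrier),
        ∀ a : A.carrier, h (f a) = k (g a)

/-- The variable projection property. -/
def VarProj (K : Set (Alg L)) : Prop :=
  ∀ (n : ℕ) (φ : List (L.Term (Fin n ⊕ Unit) × L.Term (Fin n ⊕ Unit))),
    ∃ ξ : L.Formula (Fin n), ξ.IsQF ∧
      (∀ A ∈ K, ∀ v : Fin n ⊕ Unit → A.carrier, ConjHolds φ v → ξ.Realize (v ∘ Sum.inl)) ∧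
      (∀ ε : L.Term (Fin n) × L.Term (Fin n),
        (∀ A ∈ K, ∀ v : Fin n ⊕ Unit → A.carrier, ConjHolds φ v → EqHolds ε (v ∘ Sum.inl)) →
        (∀ A ∈ K, ∀ v : Fin n → A.carrier, ξ.Realize v → EqHolds ε v))

/-- The equational variable projection property. -/
def EqVarProj (K : Set (Alg L)) : Prop :=
  ∀ (n : ℕ) (φ : List (L.Term (Fin n ⊕ Unit) × L.Term (Fin n ⊕ Unit))),
    ∃ ξ : List (L.Term (Fin n) × L.Term (Fin n)),
      (∀ A ∈ K, ∀ v : Fin n ⊕ Unit → A.carrier, ConjHolds φ v → ConjHolds ξ (v ∘ Sum.inl)) ∧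
      (∀ ε : L.Term (Fin n) × L.Term (Fin n),
        (∀ A ∈ K, ∀ v : Fin n ⊕ Unit → A.carrier, ConjHolds φ v → EqHolds ε (v ∘ Sum.inl)) →
        (∀ A ∈ K, ∀ v : Fin n → A.carrier, ConjHolds ξ v → EqHolds ε v))

/-- The conservative model extension property. -/
def ConsModelExt (K : Set (Alg L)) : Prop :=
  ∀ (n : ℕ) (pos neg : List (L.Term (Fin n ⊕ Unit) × L.Term (Fin n ⊕ Unit))),
    ∃ χ : L.Formula (Fin n), χ.IsQF ∧
      (∀ A ∈ K, ∀ v : Fin n ⊕ Unit → A.carrier,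
        ConjHolds pos v → NegConjHolds neg v → χ.Realize (v ∘ Sum.inl)) ∧
      (∀ A ∈ K, ∀ a : Fin n → A.carrier,
        Substructure.closure L (Set.range a) = ⊤ →
        χ.Realize a →
        (∀ ε : L.Term (Fin n) × L.Term (Fin n),
          (∀ B ∈ K, ∀ v : Fin n ⊕ Unit → B.carrier,
            ConjHolds pos v → EqHolds ε (v ∘ Sum.inl)) →
          EqHolds ε a) →
        ∃ B ∈ K, ∃ (g : A.carrier ↪[L] B.carrier) (b : B.carrier),
          ConjHolds pos (Sum.elim (⇑g ∘ a) fun _ => b) ∧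
          NegConjHolds neg (Sum.elim (⇑g ∘ a) fun _ => b))

/-- The strengthened extension property of Proposition 3.8 (tuples of new variables, and no
conservativity conditions). -/
def StrongModelExt (K : Set (Alg L)) : Prop :=
  ∀ (n m : ℕ) (pos neg : List (L.Term (Fin n ⊕ Fin m) × L.Term (Fin n ⊕ Fin m))),
    ∃ χ : L.Formula (Fin n), χ.IsQF ∧
      (∀ A ∈ K, ∀ v : Fin n ⊕ Fin m → A.carrier,
        ConjHolds pos v → NegConjHolds neg v → χ.Realize (v ∘ Sum.inl)) ∧
      (∀ A ∈ K, ∀ a : Fin n → A.carrier, χ.Realize a →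
        ∃ B ∈ K, ∃ (g : A.carrier ↪[L] B.carrier) (b : Fin m → B.carrier),
          ConjHolds pos (Sum.elim (⇑g ∘ a) b) ∧ NegConjHolds neg (Sum.elim (⇑g ∘ a) b))

/-- The equational variable restriction property. `π` is either `⊥` (encoded by `none`) or a
conjunction of equations. -/
def OptConjHolds {α : Type} {M : Type u} [L.Structure M] :
    Option (List (L.Term α × L.Term α)) → (α → M) → Prop
  | none => fun _ => False
  | some c => fun v => ConjHolds c v

def EqVarRestrict (K : Set (Alg L)) : Prop :=
  ∀ (n : ℕ) (γ : List (L.Term (Fin n ⊕ Unit) × L.Term (Fin n ⊕ Unit))),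
    ∃ π : Option (List (L.Term (Fin n) × L.Term (Fin n))),
      (∀ A ∈ K, ∀ v : Fin n ⊕ Unit → A.carrier, OptConjHolds π (v ∘ Sum.inl) → ConjHolds γ v) ∧
      (∀ φ : List (L.Term (Fin n) × L.Term (Fin n)),
        (∀ A ∈ K, ∀ v : Fin n ⊕ Unit → A.carrier, ConjHolds φ (v ∘ Sum.inl) → ConjHolds γ v) →
        (∀ A ∈ K, ∀ v : Fin n → A.carrier, ConjHolds φ v → OptConjHolds π v))

/-- A locally finite class of algebras. -/
def LocallyFinite (K : Set (Alg L)) : Prop :=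
  ∀ A ∈ K, ∀ S : L.Substructure A.carrier, S.FG → Finite ↥S

/-- A congruence of an `L`-structure. -/
structure Congruence (L : FirstOrder.Language.{u, u}) (M : Type u) [L.Structure M] :
    Type u where
  rel : M → M → Prop
  refl : ∀ a, rel a a
  symm : ∀ a b, rel a b → rel b a
  trans : ∀ a b c, rel a b → rel b c → rel a c
  compat : ∀ (n : ℕ) (f : L.Functions n) (x y : Fin n → M),
    (∀ i, rel (x i) (y i)) → rel (funMap f x) (funMap f y)

/-- The congruence generated by a set of pairs. -/
def congGen (L : FirstOrder.Language.{u, u}) (M : Type u) [L.Structure M]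
    (s : Set (M × M)) : Congruence L M where
  rel a b := ∀ θ : Congruence L M, (∀ p ∈ s, θ.rel p.1 p.2) → θ.rel a b
  refl a θ _ := θ.refl a
  symm a b h θ hs := θ.symm a b (h θ hs)
  trans a b c h₁ h₂ θ hs := θ.trans a b c (h₁ θ hs) (h₂ θ hs)
  compat n f x y h θ hs := θ.compat n f x y fun i => h i θ hs

/-- The principal congruence generated by a pair. -/
def principalCong (L : FirstOrder.Language.{u, u}) (M : Type u) [L.Structure M]
    (b₁ b₂ : M) : Congruence L M :=
  congGen L M {(b₁, b₂)}

/-- A compact (finitely generated) congruence. -/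
def Congruence.IsCompact {M : Type u} [L.Structure M] (θ : Congruence L M) : Prop :=
  ∃ s : Set (M × M), s.Finite ∧ ∀ a b, θ.rel a b ↔ (congGen L M s).rel a b

/-- The meet of two congruences. -/
def infCong {M : Type u} [L.Structure M] (θ₁ θ₂ : Congruence L M) : Congruence L M where
  rel a b := θ₁.rel a b ∧ θ₂.rel a b
  refl a := ⟨θ₁.refl a, θ₂.refl a⟩
  symm a b h := ⟨θ₁.symm a b h.1, θ₂.symm a b h.2⟩
  trans a b c h₁ h₂ := ⟨θ₁.trans a b c h₁.1 h₂.1, θ₂.trans a b c h₁.2 h₂.2⟩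
  compat n f x y h :=
    ⟨θ₁.compat n f x y fun i => (h i).1, θ₂.compat n f x y fun i => (h i).2⟩

/-- The join of two congruences. -/
def supCong {M : Type u} [L.Structure M] (θ₁ θ₂ : Congruence L M) : Congruence L M :=
  congGen L M {p : M × M | θ₁.rel p.1 p.2 ∨ θ₂.rel p.1 p.2}

/-- The compact intersection property. -/
def HasCIP (K : Set (Alg L)) : Prop :=
  ∀ A ∈ K, ∀ θ₁ θ₂ : Congruence L A.carrier,
    θ₁.IsCompact → θ₂.IsCompact → (infCong θ₁ θ₂).IsCompact

/-- Congruence distributivity of a class. -/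
def CongDistributive (K : Set (Alg L)) : Prop :=
  ∀ A ∈ K, ∀ θ₁ θ₂ θ₃ : Congruence L A.carrier, ∀ a b : A.carrier,
    (infCong θ₁ (supCong θ₂ θ₃)).rel a b ↔ (supCong (infCong θ₁ θ₂) (infCong θ₁ θ₃)).rel a b

/-- The congruence extension property. -/
def CongExtension (K : Set (Alg L)) : Prop :=
  ∀ A ∈ K, ∀ (S : L.Substructure A.carrier) (θ : Congruence L ↥S),
    ∃ θ' : Congruence L A.carrier, ∀ a b : ↥S, θ'.rel ↑a ↑b ↔ θ.rel a b

/-- Equationally definable principal congruences. -/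
def EDPC (K : Set (Alg L)) : Prop :=
  ∃ φ : List (L.Term (Fin 4) × L.Term (Fin 4)),
    ∀ A ∈ K, ∀ a₁ a₂ b₁ b₂ : A.carrier,
      (principalCong L A.carrier b₁ b₂).rel a₁ a₂ ↔ ConjHolds φ ![a₁, a₂, b₁, b₂]

/-- Quantifier-free definable principal congruences. -/
def QFDPC (K : Set (Alg L)) : Prop :=
  ∃ α : L.Formula (Fin 4), α.IsQF ∧
    ∀ A ∈ K, ∀ a₁ a₂ b₁ b₂ : A.carrier,
      (principalCong L A.carrier b₁ b₂).rel a₁ a₂ ↔ α.Realize ![a₁, a₂, b₁, b₂]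

/-- Parametrically definable principal congruences. -/
def PDPC (K : Set (Alg L)) : Prop :=
  ∃ (m : ℕ) (ξ : L.Formula (Fin 4 ⊕ Fin m)), ξ.IsQF ∧
    ∀ A ∈ K, ∀ a₁ a₂ b₁ b₂ : A.carrier,
      (principalCong L A.carrier b₁ b₂).rel a₁ a₂ ↔
        ∀ B ∈ K, ∀ g : A.carrier ↪[L] B.carrier, ∀ w : Fin m → B.carrier,
          ξ.Realize (Sum.elim (fun i : Fin 4 => g (![a₁, a₂, b₁, b₂] i)) w)

/-- The pair `(γ, φ)` witnesses a guarded deduction theorem for `K`. -/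
def GuardedDTWitness (K : Set (Alg L)) (m : ℕ)
    (γ φ : List (L.Term (Fin 4 ⊕ Fin m) × L.Term (Fin 4 ⊕ Fin m))) : Prop :=
  ∀ (p : ℕ) (s₁ s₂ t₁ t₂ : L.Term (Fin p)) (π : List (L.Term (Fin p) × L.Term (Fin p))),
    ((∀ A ∈ K, ∀ v : Fin p → A.carrier,
        ConjHolds π v → t₁.realize v = t₂.realize v → s₁.realize v = s₂.realize v) ↔
      (∀ A ∈ K, ∀ v : Fin p → A.carrier, ConjHolds π v →
        ∀ w : Fin m → A.carrier,
          ConjHolds γ (Sum.elim ![s₁.realize v, s₂.realize v, t₁.realize v, t₂.realize v] w) →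
          ConjHolds φ (Sum.elim ![s₁.realize v, s₂.realize v, t₁.realize v, t₂.realize v] w))) ∧
    (∀ σ : L.Term (Fin p) × L.Term (Fin p),
      ((∀ A ∈ K, ∀ v : Fin p → A.carrier, ∀ w : Fin m → A.carrier,
          ConjHolds π v →
          ConjHolds γ (Sum.elim ![s₁.realize v, s₂.realize v, t₁.realize v, t₂.realize v] w) →
          EqHolds σ v) ↔
        (∀ A ∈ K, ∀ v : Fin p → A.carrier, ConjHolds π v → EqHolds σ v)))

/-- `K` has a guarded deduction theorem. -/
def GuardedDT (K : Set (Alg L)) : Prop :=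
  ∃ (m : ℕ) (γ φ : List (L.Term (Fin 4 ⊕ Fin m) × L.Term (Fin 4 ⊕ Fin m))),
    GuardedDTWitness K m γ φ

/-- The term algebra. -/
instance termStructure (α : Type) : L.Structure (L.Term α) where
  funMap f x := Term.func f x
  RelMap _ _ := False

/-- The congruence of the term algebra consisting of the identities of the class `K`. -/
def varietyCong (K : Set (Alg L)) (α : Type) : Congruence L (L.Term α) where
  rel s t := ∀ A ∈ K, ∀ v : α → A.carrier, s.realize v = t.realize v
  refl _ _ _ _ := rfl
  symm _ _ h A hA v := (h A hA v).symm
  trans _ _ _ h₁ h₂ A hA v := (h₁ A hA v).trans (h₂ A hA v)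
  compat n f x y h A hA v := by
    show Term.realize v (Term.func f x) = Term.realize v (Term.func f y)
    simp only [Term.realize]
    exact congrArg (funMap f) (funext fun i => h i A hA v)

/-- The setoid underlying a congruence. -/
def Congruence.setoid {M : Type u} [L.Structure M] (θ : Congruence L M) : Setoid M :=
  ⟨θ.rel, ⟨θ.refl, fun h => θ.symm _ _ h, fun h h' => θ.trans _ _ _ h h'⟩⟩

/-- The quotient of an algebra by a congruence. -/
abbrev QuotAlg {M : Type u} [L.Structure M] (θ : Congruence L M) : Type u :=
  Quotient θ.setoid

noncomputable instance quotAlgStructure {M : Type u} [L.Structure M] (θ : Congruence L M) :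
    L.Structure (QuotAlg θ) where
  funMap f x := Quotient.mk θ.setoid (funMap f fun i => (x i).out)
  RelMap _ _ := False

/-- The free algebra of the class `K` over the variables `α`. -/
abbrev FreeAlg (K : Set (Alg L)) (α : Type) : Type u :=
  QuotAlg (varietyCong K α)

/-- `A` is finitely presented relative to the class `K`: it is isomorphic to a quotient of a
finitely generated `K`-free algebra by a compact congruence. -/
def IsFinitelyPresentedIn (K : Set (Alg L)) (A : Type u) [L.Structure A] : Prop :=
  ∃ (n : ℕ) (s : Set (FreeAlg K (Fin n) × FreeAlg K (Fin n))), s.Finite ∧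
    Nonempty (A ≃[L] QuotAlg (congGen L (FreeAlg K (Fin n)) s))

/-- Coherence: every finitely generated subalgebra of a finitely presented member of `K` is
finitely presented. -/
def Coherent (K : Set (Alg L)) : Prop :=
  ∀ A ∈ K, IsFinitelyPresentedIn K A.carrier →
    ∀ S : L.Substructure A.carrier, S.FG → IsFinitelyPresentedIn K ↥S


namespace Lemma41

open FirstOrder.Language.Term

variable {L : FirstOrder.Language.{u, u}}

/-! ### Term-level substitution lemmas -/

theorem subst_subst' {β γ δ : Type} (t : L.Term β) (ζ : β → L.Term γ) (ξ : γ → L.Term δ) :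
    (t.subst ζ).subst ξ = t.subst fun w => (ζ w).subst ξ := by
  induction t with
  | var => rfl
  | func f ts ih =>
    simp only [Term.subst]
    exact congrArg _ (funext fun i => ih i)

theorem subst_relabel' {β γ δ : Type} (t : L.Term β) (g : β → γ) (ζ : γ → L.Term δ) :
    (t.relabel g).subst ζ = t.subst (ζ ∘ g) := by
  induction t with
  | var => rfl
  | func f ts ih =>
    simp only [Term.relabel, Term.subst]
    exact congrArg _ (funext fun i => ih i)

theorem relabel_subst' {β γ δ : Type} (t : L.Term β) (ζ : β → L.Term γ) (g : γ → δ) :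
    (t.subst ζ).relabel g = t.subst fun w => (ζ w).relabel g := by
  induction t with
  | var => rfl
  | func f ts ih =>
    simp only [Term.relabel, Term.subst]
    exact congrArg _ (funext fun i => ih i)

theorem subst_var_comp {β γ : Type} (t : L.Term β) (g : β → γ) :
    t.subst (fun w => Term.var (g w)) = t.relabel g := by
  induction t with
  | var => rfl
  | func f ts ih =>
    simp only [Term.relabel, Term.subst]
    exact congrArg _ (funext fun i => ih i)

theorem subst_congr' {β γ : Type} [DecidableEq β] {t : L.Term β} {ζ ζ' : β → L.Term γ}
    (h : ∀ w ∈ t.varFinset, ζ w = ζ' w) : t.subst ζ = t.subst ζ' := by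
  induction t with
  | var w => exact h w (by simp [Term.varFinset])
  | func f ts ih =>
    simp only [Term.subst]
    refine congrArg _ (funext fun i => ih i fun w hw => h w ?_)
    simp only [Term.varFinset, Finset.mem_biUnion]
    exact ⟨i, Finset.mem_univ i, hw⟩

theorem relabel_constants {β γ : Type} (c : L.Constants) (g : β → γ) :
    (Constants.term c : L.Term β).relabel g = Constants.term c := by
  show Term.relabel g (Term.func c default) = Term.func c default
  simp only [Term.relabel]
  exact congrArg _ (funext fun i => i.elim0)

/-! ### Congruence basics -/

theorem congGen_rel_of_mem {M : Type u} [L.Structure M] {s : Set (M × M)} {a b : M}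
    (h : (a, b) ∈ s) : (congGen L M s).rel a b := fun θ hθ => hθ _ h

theorem congGen_le {M : Type u} [L.Structure M] {s : Set (M × M)} {θ : Congruence L M}
    (h : ∀ p ∈ s, θ.rel p.1 p.2) {a b : M} (hab : (congGen L M s).rel a b) : θ.rel a b :=
  hab θ h

/-- Pullback of a congruence along a homomorphism-like function. -/
def pullCong {M N : Type u} [L.Structure M] [L.Structure N] (h : M → N)
    (hh : ∀ (k : ℕ) (f : L.Functions k) (x : Fin k → M), h (funMap f x) = funMap f (h ∘ x))
    (θ : Congruence L N) : Congruence L M where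
  rel a b := θ.rel (h a) (h b)
  refl a := θ.refl _
  symm a b hab := θ.symm _ _ hab
  trans a b c h1 h2 := θ.trans _ _ _ h1 h2
  compat k f x y hxy := by
    show θ.rel (h (funMap f x)) (h (funMap f y))
    rw [hh, hh]
    exact θ.compat _ _ _ _ fun i => hxy i

theorem congGen_rel_map {M N : Type u} [L.Structure M] [L.Structure N] {s : Set (M × M)}
    (h : M → N)
    (hh : ∀ (k : ℕ) (f : L.Functions k) (x : Fin k → M), h (funMap f x) = funMap f (h ∘ x))
    {θ' : Congruence L N} (hgen : ∀ p ∈ s, θ'.rel (h p.1) (h p.2)) {a b : M}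
    (hab : (congGen L M s).rel a b) : θ'.rel (h a) (h b) :=
  congGen_le (θ := pullCong h hh θ') hgen hab

/-! ### Quotient algebras -/

theorem rel_out {M : Type u} [L.Structure M] (θ : Congruence L M) (a : M) :
    θ.rel (Quotient.mk θ.setoid a).out a := by
  have h := Quotient.exact (s := θ.setoid) (Quotient.out_eq (Quotient.mk θ.setoid a))
  exact h

theorem mk_funMap {M : Type u} [L.Structure M] (θ : Congruence L M) {k : ℕ}
    (f : L.Functions k) (x : Fin k → M) :
    (funMap f (fun i => Quotient.mk θ.setoid (x i)) : QuotAlg θ)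
      = Quotient.mk θ.setoid (funMap f x) := by
  show Quotient.mk θ.setoid (funMap f fun i => (Quotient.mk θ.setoid (x i)).out)
      = Quotient.mk θ.setoid (funMap f x)
  exact Quotient.sound (θ.compat _ f _ _ fun i => rel_out θ (x i))

/-! ### Closure properties of varieties -/

theorem mem_of_surjHom [L.IsAlgebraic] {V : Set (Alg L)} (hV : IsVariety V) {A : Alg L}
    (hA : A ∈ V) {B : Type u} [L.Structure B] (h : A.carrier → B)
    (hh : ∀ (k : ℕ) (f : L.Functions k) (x : Fin k → A.carrier),
      h (funMap f x) = funMap f (h ∘ x))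
    (hs : Function.Surjective h) : Alg.mk B ∈ V :=
  hV.1 A hA B ⟨h, fun {k} f x => hh k f x, fun {k} r => isEmptyElim r⟩ hs

theorem mem_of_injHom [L.IsAlgebraic] {V : Set (Alg L)} (hV : IsVariety V) {A : Alg L}
    (hA : A ∈ V) {B : Type u} [L.Structure B] (h : B → A.carrier)
    (hh : ∀ (k : ℕ) (f : L.Functions k) (x : Fin k → B),
      h (funMap f x) = funMap f (h ∘ x))
    (hi : Function.Injective h) : Alg.mk B ∈ V := by
  let S : L.Substructure A.carrier :=
    { carrier := Set.range h
      fun_mem := by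
        intro k f x hx
        choose b hb using hx
        exact ⟨funMap f b, by rw [hh]; exact congrArg (funMap f) (funext hb)⟩ }
  have hS : Alg.mk (↥S) ∈ V := hV.2.1 A hA S
  have hmem : ∀ s : ↥S, ∃ b : B, h b = (s : A.carrier) := fun s => s.2
  refine mem_of_surjHom hV hS (fun s => (hmem s).choose) ?_ ?_
  · intro k f x
    apply hi
    calc h ((hmem (funMap f x)).choose) = ((funMap f x : ↥S) : A.carrier) :=
        (hmem (funMap f x)).choose_spec
    _ = funMap f (fun i => ((x i : ↥S) : A.carrier)) := rfl
    _ = funMap f (fun i => h ((hmem (x i)).choose)) := by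
        refine congrArg _ (funext fun i => ?_)
        exact ((hmem (x i)).choose_spec).symm
    _ = h (funMap f fun i => (hmem (x i)).choose) := (hh k f _).symm
  · intro b
    refine ⟨⟨h b, ⟨b, rfl⟩⟩, hi ?_⟩
    exact (hmem ⟨h b, ⟨b, rfl⟩⟩).choose_spec

theorem mem_quot [L.IsAlgebraic] {V : Set (Alg L)} (hV : IsVariety V) {A : Alg L}
    (hA : A ∈ V) (θ : Congruence L A.carrier) : Alg.mk (QuotAlg θ) ∈ V :=
  mem_of_surjHom hV hA (Quotient.mk θ.setoid)
    (fun _ f x => (mk_funMap θ f x).symm) (fun q => ⟨q.out, Quotient.out_eq _⟩)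

/-! ### The free algebra lies in the variety -/

variable (V : Set (Alg L)) (α : Type)

/-- Class of a term in the free algebra. -/
def mkF (t : L.Term α) : FreeAlg V α := Quotient.mk (varietyCong V α).setoid t

theorem mkF_out (q : FreeAlg V α) : mkF V α q.out = q := Quotient.out_eq q

theorem realize_mk_var (θ : Congruence L (L.Term α)) (t : L.Term α) :
    Term.realize (fun w => Quotient.mk θ.setoid (Term.var w)) t = Quotient.mk θ.setoid t := by
  induction t with
  | var w => rfl
  | func f ts ih =>
    rw [Term.realize_func]
    simp only [ih]
    exact mk_funMap θ f ts

/-- The kernel congruence of an evaluation into an algebra. -/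
def kerCong {A : Type u} [L.Structure A] (v : α → A) : Congruence L (L.Term α) where
  rel s t := s.realize v = t.realize v
  refl _ := rfl
  symm _ _ h := h.symm
  trans _ _ _ h₁ h₂ := h₁.trans h₂
  compat k f x y h := by
    show Term.realize v (Term.func f x) = Term.realize v (Term.func f y)
    rw [Term.realize_func, Term.realize_func]
    exact congrArg _ (funext h)

theorem kerCong_quot_mem [L.IsAlgebraic] (hV : IsVariety V) {A : Alg L} (hA : A ∈ V)
    (v : α → A.carrier) : Alg.mk (L := L) (QuotAlg (kerCong (L := L) α v)) ∈ V := by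
  refine mem_of_injHom hV hA (Quotient.lift (Term.realize v) fun s t h => h) ?_ ?_
  · intro k f x
    show Term.realize v (funMap f fun i => (x i).out) = _
    rw [show (funMap f fun i => (x i).out : L.Term α) = Term.func f (fun i => (x i).out) from rfl,
      Term.realize_func]
    refine congrArg _ (funext fun i => ?_)
    conv_rhs => rw [Function.comp_apply, ← Quotient.out_eq (x i)]
    rfl
  · intro a b
    induction a using Quotient.ind
    induction b using Quotient.ind
    exact fun h => Quotient.sound h

theorem freeAlg_mem [L.IsAlgebraic] (hV : IsVariety V) : Alg.mk (FreeAlg V α) ∈ V := by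
  let ι := {θ : Congruence L (L.Term α) // Alg.mk (QuotAlg θ) ∈ V}
  have hP : Alg.mk (∀ i : ι, QuotAlg i.1) ∈ V := hV.2.2 ι (fun i => QuotAlg i.1) fun i => i.2
  let e : FreeAlg V α → ∀ i : ι, QuotAlg i.1 :=
    Quotient.lift (fun t => fun i => Quotient.mk i.1.setoid t)
      (fun s t h => funext fun i => by
        have h1 := h (Alg.mk (QuotAlg i.1)) i.2 (fun w => Quotient.mk i.1.setoid (Term.var w))
        rwa [realize_mk_var, realize_mk_var] at h1)
  refine mem_of_injHom hV hP e ?_ ?_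
  · intro k f x
    funext i
    have hx : ∀ j, e (x j) i = Quotient.mk i.1.setoid ((x j).out) := fun j => by
      conv_lhs => rw [← Quotient.out_eq (x j)]
      rfl
    show Quotient.mk i.1.setoid (funMap f fun j => (x j).out)
        = funMap f (fun j => e (x j) i)
    rw [show (fun j => e (x j) i) = fun j => Quotient.mk i.1.setoid ((x j).out) from
      funext hx]
    exact (mk_funMap i.1 f _).symm
  · intro a b
    induction a using Quotient.ind
    induction b using Quotient.ind
    intro hab
    refine Quotient.sound (fun A hA v => ?_)
    exact Quotient.exact (congrFun hab ⟨kerCong (L := L) α v, kerCong_quot_mem V α hV hA v⟩)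

/-! ### Semantic consequence versus generated congruences -/

/-- `s ≈ t` is a semantic consequence of `ψ` over `V`. -/
def SemCons (ψ : List (L.Term α × L.Term α)) (s t : L.Term α) : Prop :=
  ∀ A ∈ V, ∀ v : α → A.carrier, ConjHolds ψ v → s.realize v = t.realize v

def liftSet (ψ : List (L.Term α × L.Term α)) : Set (FreeAlg V α × FreeAlg V α) :=
  (fun p : L.Term α × L.Term α => (mkF V α p.1, mkF V α p.2)) '' {p | p ∈ ψ}

noncomputable def congOf (ψ : List (L.Term α × L.Term α)) : Congruence L (FreeAlg V α) :=
  congGen L (FreeAlg V α) (liftSet V α ψ)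

/-- Evaluation of the free algebra in a member of `V`. -/
def evalF (A : Alg L) (hA : A ∈ V) (v : α → A.carrier) : FreeAlg V α → A.carrier :=
  Quotient.lift (Term.realize v) fun s t h => h A hA v

theorem evalF_funMap (A : Alg L) (hA : A ∈ V) (v : α → A.carrier) {k : ℕ}
    (f : L.Functions k) (x : Fin k → FreeAlg V α) :
    evalF V α A hA v (funMap f x) = funMap f fun i => evalF V α A hA v (x i) := by
  have hx : ∀ i, evalF V α A hA v (x i) = ((x i).out).realize v := fun i => by
    conv_lhs => rw [← Quotient.out_eq (x i)]
    rfl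
  show Term.realize v (funMap f fun i => (x i).out) = _
  rw [show (funMap f fun i => (x i).out : L.Term α) = Term.func f (fun i => (x i).out) from rfl,
    Term.realize_func]
  exact congrArg _ (funext fun i => (hx i).symm)

theorem semCons_of_rel {ψ : List (L.Term α × L.Term α)} {s t : L.Term α}
    (h : (congOf V α ψ).rel (mkF V α s) (mkF V α t)) : SemCons V α ψ s t := by
  intro A hA v hc
  let Θ : Congruence L (FreeAlg V α) :=
    { rel := fun a b => ∀ (A' : Alg L) (hA' : A' ∈ V) (v' : α → A'.carrier),
        ConjHolds ψ v' → evalF V α A' hA' v' a = evalF V α A' hA' v' b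
      refl := fun a A' hA' v' _ => rfl
      symm := fun a b hab A' hA' v' hc' => (hab A' hA' v' hc').symm
      trans := fun a b c h1 h2 A' hA' v' hc' => (h1 A' hA' v' hc').trans (h2 A' hA' v' hc')
      compat := fun k f x y hxy A' hA' v' hc' => by
        rw [evalF_funMap, evalF_funMap]
        exact congrArg _ (funext fun i => hxy i A' hA' v' hc') }
  have hgen : ∀ p ∈ liftSet V α ψ, Θ.rel p.1 p.2 := by
    rintro p ⟨q, hq, rfl⟩
    intro A' hA' v' hc'
    exact hc' q hq
  exact h Θ hgen A hA v hc

theorem realize_mk_mk (θ : Congruence L (FreeAlg V α)) (t : L.Term α) :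
    Term.realize (fun w => Quotient.mk θ.setoid (mkF V α (Term.var w))) t
      = Quotient.mk θ.setoid (mkF V α t) := by
  induction t with
  | var w => rfl
  | func f ts ih =>
    rw [Term.realize_func]
    simp only [ih]
    rw [mk_funMap θ f (fun i => mkF V α (ts i))]
    refine congrArg _ ?_
    exact mk_funMap (varietyCong V α) f ts

theorem rel_of_semCons [L.IsAlgebraic] (hV : IsVariety V) {ψ : List (L.Term α × L.Term α)}
    {s t : L.Term α} (h : SemCons V α ψ s t) :
    (congOf V α ψ).rel (mkF V α s) (mkF V α t) := by
  intro θ hθ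
  have hB : Alg.mk (QuotAlg θ) ∈ V := mem_quot hV (freeAlg_mem V α hV) θ
  have hc : ConjHolds ψ (fun w => Quotient.mk θ.setoid (mkF V α (Term.var w))) := by
    intro p hp
    show Term.realize _ p.1 = Term.realize _ p.2
    rw [realize_mk_mk, realize_mk_mk]
    have hθp : θ.rel (mkF V α p.1) (mkF V α p.2) := hθ _ ⟨p, hp, rfl⟩
    exact Quotient.sound (s := θ.setoid) hθp
  have := h (Alg.mk (QuotAlg θ)) hB _ hc
  rw [realize_mk_mk, realize_mk_mk] at this
  exact Quotient.exact this

/-! ### Substitution endomorphisms of the free algebra -/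

def substEndo (ζ : α → L.Term α) : FreeAlg V α → FreeAlg V α :=
  Quotient.lift (fun t => mkF V α (t.subst ζ))
    (fun s t h => Quotient.sound
      (show (varietyCong V α).rel _ _ from fun A hA v => by
        rw [Term.realize_subst, Term.realize_subst]
        exact h A hA _))

theorem substEndo_mk (ζ : α → L.Term α) (t : L.Term α) :
    substEndo V α ζ (mkF V α t) = mkF V α (t.subst ζ) := rfl

theorem substEndo_funMap (ζ : α → L.Term α) (k : ℕ) (f : L.Functions k)
    (x : Fin k → FreeAlg V α) :
    substEndo V α ζ (funMap f x) = funMap f (substEndo V α ζ ∘ x) := by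
  have hx : ∀ i, (substEndo V α ζ ∘ x) i = mkF V α ((x i).out.subst ζ) := fun i => by
    show substEndo V α ζ (x i) = _
    conv_lhs => rw [← Quotient.out_eq (x i)]
    rfl
  calc substEndo V α ζ (funMap f x)
      = mkF V α (Term.func f fun i => ((x i).out.subst ζ)) := rfl
    _ = funMap f (fun i => mkF V α ((x i).out.subst ζ)) :=
        (mk_funMap (varietyCong V α) f _).symm
    _ = funMap f (substEndo V α ζ ∘ x) := by
        exact congrArg _ (funext fun i => (hx i).symm)

theorem subst3_relabel {β γ : Type} (t : L.Term β) (ρ : β → γ)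
    (ζ1 ζ2 ζ3 : γ → L.Term γ) :
    (((t.relabel ρ).subst ζ1).subst ζ2).subst ζ3
      = t.subst fun w => ((ζ1 (ρ w)).subst ζ2).subst ζ3 := by
  induction t with
  | var => rfl
  | func f ts ih =>
    simp only [Term.relabel, Term.subst]
    exact congrArg _ (funext fun i => ih i)

theorem foldr_varFinset_subset {β : Type} [DecidableEq β]
    (l : List (L.Term β × L.Term β)) :
    ∀ p ∈ l, p.1.varFinset ∪ p.2.varFinset ⊆
      l.foldr (fun p acc => p.1.varFinset ∪ p.2.varFinset ∪ acc) ∅ := by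
  induction l with
  | nil => intro p hp; simp at hp
  | cons a l ih =>
    intro p hp
    rcases List.mem_cons.mp hp with h | h
    · subst h
      exact Finset.subset_union_left
    · exact (ih p h).trans Finset.subset_union_right

end Lemma41

/-- Lemma 4.1. Let `V` be a congruence distributive variety of algebras over an
algebraic first-order language `L` that has the compact intersection property. For any finite
tuple of variables `x̄` and conjunctions of equations `φ₁(x̄), φ₂(x̄)`, there exists a conjunction
of equations `π(x̄)` such that, for every equation `ε(x̄,ȳ)`,
`V ⊨ (φ₁ ∨ φ₂) → ε` if, and only if, `V ⊨ π → ε`. -/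
theorem exists_conj_equiv_disjunction
    (L : FirstOrder.Language.{u, u}) [L.IsAlgebraic] (hc : Nonempty L.Constants)
    (V : Set (Alg L)) (hV : IsVariety V) (hCD : CongDistributive V) (hCIP : HasCIP V) :
    ∀ (n : ℕ) (φ₁ φ₂ : List (L.Term (Fin n) × L.Term (Fin n))),
      ∃ π : List (L.Term (Fin n) × L.Term (Fin n)),
        ∀ (m : ℕ) (ε : L.Term (Fin n ⊕ Fin m) × L.Term (Fin n ⊕ Fin m)),
          ((∀ A ∈ V, ∀ v : Fin n ⊕ Fin m → A.carrier,
              (ConjHolds φ₁ (v ∘ Sum.inl) ∨ ConjHolds φ₂ (v ∘ Sum.inl)) → EqHolds ε v) ↔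
            (∀ A ∈ V, ∀ v : Fin n ⊕ Fin m → A.carrier,
              ConjHolds π (v ∘ Sum.inl) → EqHolds ε v)) := by
  classical
  intro n φ₁ φ₂
  -- The set of "free variables" : the designated `Fin n` plus an infinite supply `ℤ`.
  let W : Type := Fin n ⊕ ℤ
  let up : L.Term (Fin n) → L.Term W := Term.relabel Sum.inl
  let lift1 : List (L.Term (Fin n) × L.Term (Fin n)) → List (L.Term W × L.Term W) :=
    fun l => l.map fun p => (up p.1, up p.2)
  let θA := Lemma41.congOf V W (lift1 φ₁)
  let θB := Lemma41.congOf V W (lift1 φ₂)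
  have hFree : Alg.mk (FreeAlg V W) ∈ V := Lemma41.freeAlg_mem V W hV
  have cA : θA.IsCompact :=
    ⟨Lemma41.liftSet V W (lift1 φ₁), Set.Finite.image _ (List.finite_toSet _),
      fun a b => Iff.rfl⟩
  have cB : θB.IsCompact :=
    ⟨Lemma41.liftSet V W (lift1 φ₂), Set.Finite.image _ (List.finite_toSet _),
      fun a b => Iff.rfl⟩
  obtain ⟨sset, hsfin, hiff⟩ := hCIP (Alg.mk (FreeAlg V W)) hFree θA θB cA cB
  let Slist : List (L.Term W × L.Term W) :=
    hsfin.toFinset.toList.map fun p => (p.1.out, p.2.out)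
  have hSlist1 : ∀ p ∈ Slist,
      (infCong θA θB).rel (Lemma41.mkF V W p.1) (Lemma41.mkF V W p.2) := by
    intro p hp
    obtain ⟨q, hq, rfl⟩ := List.mem_map.mp hp
    have hq' : (q.1, q.2) ∈ sset := by
      rw [Prod.mk.eta]
      exact hsfin.mem_toFinset.mp (Finset.mem_toList.mp hq)
    have h2 := (hiff q.1 q.2).mpr (Lemma41.congGen_rel_of_mem hq')
    show (infCong θA θB).rel (Lemma41.mkF V W q.1.out) (Lemma41.mkF V W q.2.out)
    rw [Lemma41.mkF_out, Lemma41.mkF_out]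
    exact h2
  have hSlist2 : ∀ q ∈ sset, ((q.1.out, q.2.out)) ∈ Slist := fun q hq =>
    List.mem_map.mpr ⟨q, Finset.mem_toList.mpr (hsfin.mem_toFinset.mpr hq), rfl⟩
  -- finite support of the generators
  let vS : Finset W := Slist.foldr (fun p acc => p.1.varFinset ∪ p.2.varFinset ∪ acc) ∅
  have hvS : ∀ p ∈ Slist, p.1.varFinset ∪ p.2.varFinset ⊆ vS :=
    Lemma41.foldr_varFinset_subset Slist
  let Mb : ℕ := vS.sup fun w => Sum.elim (fun _ : Fin n => 0) Int.natAbs w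
  -- the uniform interpolant
  let c0 : L.Constants := hc.some
  let ζdown : W → L.Term (Fin n) := Sum.elim Term.var fun _ => Constants.term c0
  let piL : List (L.Term (Fin n) × L.Term (Fin n)) :=
    Slist.map fun p => (p.1.subst ζdown, p.2.subst ζdown)
  refine ⟨piL, ?_⟩
  intro m ε
  let N : ℤ := 2 * Mb + m + 1
  let ρ : Fin n ⊕ Fin m → W := Sum.map id fun j => (j : ℤ)
  let ζτ : W → L.Term W :=
    Sum.elim (fun i => Term.var (Sum.inl i)) fun k => Term.var (Sum.inr (k - N))
  let ζσ : W → L.Term W :=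
    Sum.elim (fun i => Term.var (Sum.inl i)) fun k => Term.var (Sum.inr (k + N))
  let ζu : W → L.Term W :=
    Sum.elim (fun i => Term.var (Sum.inl i)) fun k =>
      if (m : ℤ) ≤ k then Constants.term c0 else Term.var (Sum.inr k)
  have hbound : ∀ p ∈ Slist, ∀ k : ℤ,
      (Sum.inr k : W) ∈ p.1.varFinset ∪ p.2.varFinset → (m : ℤ) ≤ k + N := by
    intro p hp k hk
    have h1 : (Sum.elim (fun _ : Fin n => 0) Int.natAbs (Sum.inr k : W)) ≤ Mb :=
      Finset.le_sup (hvS p hp hk)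
    simp only [Sum.elim_inr] at h1
    show (m : ℤ) ≤ k + (2 * Mb + m + 1)
    omega
  -- The key generator computation.
  have hgenPi : ∀ p ∈ sset, (Lemma41.congOf V W (lift1 piL)).rel
      (Lemma41.substEndo V W ζu (Lemma41.substEndo V W ζσ p.1))
      (Lemma41.substEndo V W ζu (Lemma41.substEndo V W ζσ p.2)) := by
    intro p hp
    have hm : (p.1.out, p.2.out) ∈ Slist := hSlist2 p hp
    have comp : ∀ t : L.Term W, (∀ k : ℤ, (Sum.inr k : W) ∈ t.varFinset → (m : ℤ) ≤ k + N) →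
        Lemma41.substEndo V W ζu (Lemma41.substEndo V W ζσ (Lemma41.mkF V W t))
          = Lemma41.mkF V W (up (t.subst ζdown)) := by
      intro t ht
      rw [Lemma41.substEndo_mk, Lemma41.substEndo_mk]
      refine congrArg _ ?_
      show (t.subst ζσ).subst ζu = Term.relabel Sum.inl (t.subst ζdown)
      rw [Lemma41.subst_subst', Lemma41.relabel_subst']
      refine Lemma41.subst_congr' fun w hw => ?_
      cases w with
      | inl i => rfl
      | inr k =>
        have hk := ht k hw
        show (Term.var (Sum.inr (k + N)) : L.Term W).subst ζu
            = (Constants.term c0 : L.Term (Fin n)).relabel Sum.inl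
        rw [Lemma41.relabel_constants]
        show ζu (Sum.inr (k + N)) = Constants.term c0
        show (if (m : ℤ) ≤ k + N then (Constants.term c0 : L.Term W)
            else Term.var (Sum.inr (k + N))) = Constants.term c0
        rw [if_pos hk]
    have e1 := comp p.1.out (fun k hk => hbound _ hm k (Finset.mem_union_left _ hk))
    have e2 := comp p.2.out (fun k hk => hbound _ hm k (Finset.mem_union_right _ hk))
    conv_lhs => rw [← Lemma41.mkF_out V W p.1]
    conv_rhs => rw [← Lemma41.mkF_out V W p.2]
    rw [e1, e2]
    refine Lemma41.congGen_rel_of_mem ?_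
    refine ⟨(up (p.1.out.subst ζdown), up (p.2.out.subst ζdown)), ?_, rfl⟩
    exact List.mem_map.mpr ⟨(p.1.out.subst ζdown, p.2.out.subst ζdown),
      List.mem_map.mpr ⟨(p.1.out, p.2.out), hm, rfl⟩, rfl⟩
  constructor
  · -- hard direction
    intro hd A hA v hπv
    -- semantic consequence over W
    have hstep : ∀ φ : List (L.Term (Fin n) × L.Term (Fin n)),
        (∀ B ∈ V, ∀ u : Fin n ⊕ Fin m → B.carrier, ConjHolds φ (u ∘ Sum.inl) → EqHolds ε u) →
        Lemma41.SemCons V W (lift1 φ) (ε.1.relabel ρ) (ε.2.relabel ρ) := by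
      intro φ hφ B hB u hcu
      have hc' : ConjHolds φ ((u ∘ ρ) ∘ Sum.inl) := by
        intro q hq
        have h3 := hcu (up q.1, up q.2) (List.mem_map.mpr ⟨q, hq, rfl⟩)
        show q.1.realize ((u ∘ ρ) ∘ Sum.inl) = q.2.realize ((u ∘ ρ) ∘ Sum.inl)
        have e1 : (u ∘ ρ) ∘ Sum.inl = u ∘ Sum.inl := rfl
        rw [e1]
        show q.1.realize (u ∘ Sum.inl) = q.2.realize (u ∘ Sum.inl)
        have h4 : (up q.1).realize u = (up q.2).realize u := h3
        rwa [Term.realize_relabel, Term.realize_relabel] at h4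
      have h5 : ε.1.realize (u ∘ ρ) = ε.2.realize (u ∘ ρ) := hφ B hB (u ∘ ρ) hc'
      show (ε.1.relabel ρ).realize u = (ε.2.relabel ρ).realize u
      rwa [Term.realize_relabel, Term.realize_relabel]
    have hA1 : θA.rel (Lemma41.mkF V W (ε.1.relabel ρ)) (Lemma41.mkF V W (ε.2.relabel ρ)) :=
      Lemma41.rel_of_semCons V W hV (hstep φ₁ (fun B hB u hu => hd B hB u (Or.inl hu)))
    have hB1 : θB.rel (Lemma41.mkF V W (ε.1.relabel ρ)) (Lemma41.mkF V W (ε.2.relabel ρ)) :=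
      Lemma41.rel_of_semCons V W hV (hstep φ₂ (fun B hB u hu => hd B hB u (Or.inr hu)))
    -- generators of θA, θB fixed by any substitution fixing Fin n variables
    have hfixlift : ∀ (φ : List (L.Term (Fin n) × L.Term (Fin n))) (ζ : W → L.Term W),
        (∀ i : Fin n, ζ (Sum.inl i) = Term.var (Sum.inl i)) →
        ∀ p ∈ Lemma41.liftSet V W (lift1 φ), (Lemma41.congOf V W (lift1 φ)).rel
          (Lemma41.substEndo V W ζ p.1) (Lemma41.substEndo V W ζ p.2) := by
      intro φ ζ hζ p hplift
      obtain ⟨q, hq, rfl⟩ := hplift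
      obtain ⟨x, hx, rfl⟩ := List.mem_map.mp hq
      have fix : ∀ y : L.Term (Fin n), (up y).subst ζ = up y := by
        intro y
        rw [Lemma41.subst_relabel']
        rw [show ζ ∘ Sum.inl = fun i => Term.var (Sum.inl i) from funext hζ]
        exact Lemma41.subst_var_comp y Sum.inl
      show (Lemma41.congOf V W (lift1 φ)).rel
        (Lemma41.substEndo V W ζ (Lemma41.mkF V W (up x.1)))
        (Lemma41.substEndo V W ζ (Lemma41.mkF V W (up x.2)))
      rw [Lemma41.substEndo_mk, Lemma41.substEndo_mk, fix, fix]
      exact Lemma41.congGen_rel_of_mem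
        ⟨(up x.1, up x.2), List.mem_map.mpr ⟨x, hx, rfl⟩, rfl⟩
    have hτA : θA.rel
        (Lemma41.substEndo V W ζτ (Lemma41.mkF V W (ε.1.relabel ρ)))
        (Lemma41.substEndo V W ζτ (Lemma41.mkF V W (ε.2.relabel ρ))) :=
      Lemma41.congGen_rel_map _ (fun k f x => Lemma41.substEndo_funMap V W ζτ k f x)
        (hfixlift φ₁ ζτ (fun i => rfl)) hA1
    have hτB : θB.rel
        (Lemma41.substEndo V W ζτ (Lemma41.mkF V W (ε.1.relabel ρ)))
        (Lemma41.substEndo V W ζτ (Lemma41.mkF V W (ε.2.relabel ρ))) :=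
      Lemma41.congGen_rel_map _ (fun k f x => Lemma41.substEndo_funMap V W ζτ k f x)
        (hfixlift φ₂ ζτ (fun i => rfl)) hB1
    have hgenS := (hiff _ _).mp ⟨hτA, hτB⟩
    have hcomp_hom : ∀ (k : ℕ) (f : L.Functions k) (x : Fin k → FreeAlg V W),
        (fun z => Lemma41.substEndo V W ζu (Lemma41.substEndo V W ζσ z)) (funMap f x)
          = funMap f ((fun z => Lemma41.substEndo V W ζu (Lemma41.substEndo V W ζσ z)) ∘ x) := by
      intro k f x
      show Lemma41.substEndo V W ζu (Lemma41.substEndo V W ζσ (funMap f x)) = _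
      rw [Lemma41.substEndo_funMap, Lemma41.substEndo_funMap]
      rfl
    have hPi := Lemma41.congGen_rel_map
      (fun z => Lemma41.substEndo V W ζu (Lemma41.substEndo V W ζσ z)) hcomp_hom hgenPi hgenS
    -- collapse the three substitutions on the ε-side
    have hcollapse : ∀ t : L.Term (Fin n ⊕ Fin m),
        Lemma41.substEndo V W ζu (Lemma41.substEndo V W ζσ
          (Lemma41.substEndo V W ζτ (Lemma41.mkF V W (t.relabel ρ))))
          = Lemma41.mkF V W (t.relabel ρ) := by
      intro t
      rw [Lemma41.substEndo_mk, Lemma41.substEndo_mk, Lemma41.substEndo_mk]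
      refine congrArg _ ?_
      rw [Lemma41.subst3_relabel t ρ ζτ ζσ ζu]
      have hw : ∀ w : Fin n ⊕ Fin m,
          ((ζτ (ρ w)).subst ζσ).subst ζu = Term.var (ρ w) := by
        intro w
        cases w with
        | inl i => rfl
        | inr j =>
          show ((Term.var (Sum.inr ((j : ℤ) - N)) : L.Term W).subst ζσ).subst ζu
              = Term.var (Sum.inr (j : ℤ))
          show (Term.var (Sum.inr ((j : ℤ) - N + N)) : L.Term W).subst ζu
              = Term.var (Sum.inr (j : ℤ))
          rw [show (j : ℤ) - N + N = (j : ℤ) by omega]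
          show (if (m : ℤ) ≤ (j : ℤ) then (Constants.term c0 : L.Term W)
              else Term.var (Sum.inr (j : ℤ))) = Term.var (Sum.inr (j : ℤ))
          rw [if_neg (not_le.mpr (by exact_mod_cast j.isLt))]
      refine (Lemma41.subst_congr' fun w _ => hw w).trans (Lemma41.subst_var_comp t ρ)
    have hPi2 : (Lemma41.congOf V W (lift1 piL)).rel
        (Lemma41.substEndo V W ζu (Lemma41.substEndo V W ζσ
          (Lemma41.substEndo V W ζτ (Lemma41.mkF V W (ε.1.relabel ρ)))))
        (Lemma41.substEndo V W ζu (Lemma41.substEndo V W ζσ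
          (Lemma41.substEndo V W ζτ (Lemma41.mkF V W (ε.2.relabel ρ))))) := hPi
    rw [hcollapse ε.1, hcollapse ε.2] at hPi2
    have hsemPi := Lemma41.semCons_of_rel V W hPi2
    -- instantiate
    let cval : A.carrier := (Constants.term c0 : L.Term (Fin n)).realize (v ∘ Sum.inl)
    let vt : W → A.carrier := Sum.elim (v ∘ Sum.inl)
      (fun k => if h : ∃ j : Fin m, ((j : ℤ) = k) then v (Sum.inr h.choose) else cval)
    have hvtρ : vt ∘ ρ = v := by
      funext w
      cases w with
      | inl i => rfl
      | inr j =>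
        show (if h : ∃ j' : Fin m, ((j' : ℤ) = (j : ℤ)) then v (Sum.inr h.choose) else cval)
            = v (Sum.inr j)
        rw [dif_pos ⟨j, rfl⟩]
        have hsp : (((⟨j, rfl⟩ : ∃ j' : Fin m, ((j' : ℤ) = (j : ℤ))).choose : Fin m) : ℤ)
            = (j : ℤ) := (⟨j, rfl⟩ : ∃ j' : Fin m, ((j' : ℤ) = (j : ℤ))).choose_spec
        have : (⟨j, rfl⟩ : ∃ j' : Fin m, ((j' : ℤ) = (j : ℤ))).choose = j :=
          Fin.ext (by exact_mod_cast hsp)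
        rw [this]
    have hconj : ConjHolds (lift1 piL) vt := by
      intro q hq
      obtain ⟨x, hx, rfl⟩ := List.mem_map.mp hq
      show (up x.1).realize vt = (up x.2).realize vt
      rw [Term.realize_relabel, Term.realize_relabel]
      have e : vt ∘ Sum.inl = v ∘ Sum.inl := rfl
      rw [e]
      exact hπv x hx
    have hfin := hsemPi A hA vt hconj
    show ε.1.realize v = ε.2.realize v
    have hfin2 : ε.1.realize (vt ∘ ρ) = ε.2.realize (vt ∘ ρ) := by
      have h6 : (ε.1.relabel ρ).realize vt = (ε.2.relabel ρ).realize vt := hfin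
      rwa [Term.realize_relabel, Term.realize_relabel] at h6
    rwa [hvtρ] at hfin2
  · -- easy direction
    intro hπ A hA v hd
    refine hπ A hA v ?_
    intro q hq
    obtain ⟨p, hp, rfl⟩ := List.mem_map.mp hq
    have hrel := hSlist1 p hp
    have key : ∀ φ : List (L.Term (Fin n) × L.Term (Fin n)),
        (Lemma41.congOf V W (lift1 φ)).rel (Lemma41.mkF V W p.1) (Lemma41.mkF V W p.2) →
        ConjHolds φ (v ∘ Sum.inl) →
        (p.1.subst ζdown).realize (v ∘ Sum.inl) = (p.2.subst ζdown).realize (v ∘ Sum.inl) := by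
      intro φ hrelφ hcφ
      have hsem := Lemma41.semCons_of_rel V W hrelφ
      have hcu : ConjHolds (lift1 φ) (fun w => (ζdown w).realize (v ∘ Sum.inl)) := by
        intro r hr
        obtain ⟨x, hx, rfl⟩ := List.mem_map.mp hr
        show (up x.1).realize _ = (up x.2).realize _
        rw [Term.realize_relabel, Term.realize_relabel]
        have e : (fun w => (ζdown w).realize (v ∘ Sum.inl)) ∘ Sum.inl = v ∘ Sum.inl := rfl
        rw [e]
        exact hcφ x hx
      have h7 := hsem A hA _ hcu
      rw [Term.realize_subst, Term.realize_subst]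
      exact h7
    show (p.1.subst ζdown).realize (v ∘ Sum.inl) = (p.2.subst ζdown).realize (v ∘ Sum.inl)
    cases hd with
    | inl h1 => exact key φ₁ hrel.1 h1
    | inr h2 => exact key φ₂ hrel.2 h2


end Paper
end

section
/- Let K be a universal class of algebras over an algebraic first-order language L with parametrically definable principal congruences. If the first-order theory of K has a model completion, then K has quantifier-free definable principal congruences. -/
namespace Paper

open FirstOrder FirstOrder.Language FirstOrder.Language.Structure

universe u

variable {L : FirstOrder.Language.{u, u}}

/-! ### Auxiliary lemmas for Proposition 5.1 -/

section Aux

open FirstOrder.Language.BoundedFormula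

lemma nonempty_of_constants (hc : Nonempty L.Constants) (M : Type*) [L.Structure M] :
    Nonempty M := ⟨funMap hc.some Fin.elim0⟩

lemma model_theoryOf {K : Set (Alg L)} {A : Alg L} (hA : A ∈ K) :
    A.carrier ⊨ theoryOf K :=
  (Theory.model_iff _).2 fun _φ hφ => hφ A hA

lemma isQF_mapTermRel {L' : FirstOrder.Language.{u, u}} {α β : Type*}
    {ft : ∀ n, L.Term (α ⊕ (Fin n)) → L'.Term (β ⊕ (Fin n))}
    {fr : ∀ n, L.Relations n → L'.Relations n} {n : ℕ} {φ : L.BoundedFormula α n}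
    (h : φ.IsQF) :
    (φ.mapTermRel ft fr (fun _ => id)).IsQF := by
  induction h with
  | falsum => exact IsQF.falsum
  | of_isAtomic ha =>
    cases ha with
    | equal t₁ t₂ => exact (IsAtomic.equal _ _).isQF
    | rel R ts => exact (IsAtomic.rel _ _).isQF
  | imp h₁ h₂ ih₁ ih₂ => exact ih₁.imp ih₂

lemma isQF_onBoundedFormula {L' : FirstOrder.Language.{u, u}} (g : L →ᴸ L') {α : Type*}
    {n : ℕ} {φ : L.BoundedFormula α n} (h : φ.IsQF) :
    (g.onBoundedFormula φ).IsQF := by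
  induction h with
  | falsum => exact IsQF.falsum
  | of_isAtomic ha =>
    cases ha with
    | equal t₁ t₂ => exact (IsAtomic.equal _ _).isQF
    | rel R ts => exact (IsAtomic.rel _ _).isQF
  | imp h₁ h₂ ih₁ ih₂ => exact ih₁.imp ih₂

lemma isQF_subst {α β : Type*} {n : ℕ} {φ : L.BoundedFormula α n} (h : φ.IsQF)
    (f : α → L.Term β) : (φ.subst f).IsQF := isQF_mapTermRel h

lemma isQF_equivSentence {α : Type u} {φ : L.Formula α} (h : φ.IsQF) :
    (Formula.equivSentence φ).IsQF := by
  show (BoundedFormula.mapTermRel _ _ _ (BoundedFormula.mapTermRel _ _ _ φ)).IsQF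
  exact isQF_mapTermRel (isQF_mapTermRel h)

lemma isQF_equivSentence_symm {α : Type u} {φ : L[[α]].Sentence} (h : φ.IsQF) :
    (Formula.equivSentence.symm φ).IsQF := by
  show (BoundedFormula.mapTermRel _ _ _ (BoundedFormula.mapTermRel _ _ _ φ)).IsQF
  exact isQF_mapTermRel (isQF_mapTermRel h)

lemma isQF_foldr_inf {α : Type*} {n : ℕ} (l : List (L.BoundedFormula α n))
    (h : ∀ φ ∈ l, φ.IsQF) : (l.foldr (· ⊓ ·) ⊤).IsQF := by
  induction l with
  | nil => exact BoundedFormula.IsQF.top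
  | cons a l ih =>
      exact BoundedFormula.IsQF.inf (h a (by simp)) (ih fun φ hφ => h φ (by simp [hφ]))

lemma formula_realize_embedding {L' : FirstOrder.Language.{u, u}} {M : Type*} {N : Type*}
    [L'.Structure M] [L'.Structure N]
    (f : M ↪[L'] N) {α : Type*} {φ : L'.Formula α} (h : φ.IsQF) (v : α → M) :
    φ.Realize (⇑f ∘ v) ↔ φ.Realize v := by
  have := h.realize_embedding (f : M ↪[L'] N) (v := v) (xs := default)
  rwa [Subsingleton.elim ((⇑f) ∘ (default : Fin 0 → M)) default] at this

lemma sentence_realize_embedding {L' : FirstOrder.Language.{u, u}} {M : Type*} {N : Type*}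
    [L'.Structure M] [L'.Structure N]
    (f : M ↪[L'] N) {φ : L'.Sentence} (h : φ.IsQF) :
    N ⊨ φ ↔ M ⊨ φ := by
  have := h.realize_embedding (f : M ↪[L'] N) (v := (default : Empty → M))
    (xs := (default : Fin 0 → M))
  rwa [Subsingleton.elim ((⇑f) ∘ (default : Fin 0 → M)) default,
    Subsingleton.elim ((⇑f) ∘ (default : Empty → M)) default] at this

/-! #### Conditions describing finitely many constraints on a potential embedding -/

/-- The type of atomic conditions about elements of `M`. -/
abbrev Cond (L : FirstOrder.Language.{u, u}) (M : Type u) : Type u :=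
  (M × M) ⊕ (Σ n : ℕ, L.Functions n × (Fin n → M) × M)

/-- Satisfaction of a condition by a map `f : M → A`. -/
def SatCond {M A : Type u} [L.Structure M] [L.Structure A]
    (c : Cond L M) (f : M → A) : Prop :=
  match c with
  | .inl p => p.1 ≠ p.2 → f p.1 ≠ f p.2
  | .inr q => funMap q.2.1 q.2.2.1 = q.2.2.2 → f q.2.2.2 = funMap q.2.1 (f ∘ q.2.2.1)

open scoped Classical in
/-- The finitely many elements of `M` mentioned in a condition. -/
noncomputable def touchCond {M : Type u} : Cond L M → Finset M
  | .inl p => {p.1, p.2}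
  | .inr q => insert q.2.2.2 (Finset.image q.2.2.1 Finset.univ)

open scoped Classical in
/-- A term representing a marked element of `M`. -/
noncomputable def vtermOf (c0 : L.Constants) {M : Type u} (E : Finset M) (m : M) :
    L.Term (Empty ⊕ Fin E.card) :=
  if h : m ∈ E then Term.var (Sum.inr (E.equivFin ⟨m, h⟩)) else Constants.term c0

open scoped Classical in
/-- The quantifier-free formula expressing a condition that holds in `M`. -/
noncomputable def condForm (c0 : L.Constants) {M : Type u} [L.Structure M] (E : Finset M) :
    Cond L M → L.BoundedFormula Empty E.card
  | .inl p => if p.1 = p.2 then ⊤ else (Term.bdEqual (vtermOf c0 E p.1) (vtermOf c0 E p.2)).not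
  | .inr q => if funMap q.2.1 q.2.2.1 = q.2.2.2 then
      Term.bdEqual (vtermOf c0 E q.2.2.2) (Term.func q.2.1 fun j => vtermOf c0 E (q.2.2.1 j))
    else ⊤

lemma vtermOf_realize (c0 : L.Constants) {M : Type u} (E : Finset M)
    {A : Type*} [L.Structure A] (v : Empty → A) (xs : Fin E.card → A) {m : M} (h : m ∈ E) :
    (vtermOf c0 E m).realize (Sum.elim v xs) = xs (E.equivFin ⟨m, h⟩) := by
  rw [vtermOf, dif_pos h]
  rfl

lemma condForm_isQF (c0 : L.Constants) {M : Type u} [L.Structure M] (E : Finset M)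
    (c : Cond L M) : (condForm c0 E c).IsQF := by
  rcases c with p | q
  · rw [condForm]
    split
    · exact BoundedFormula.IsQF.top
    · exact (BoundedFormula.IsAtomic.equal _ _).isQF.not
  · rw [condForm]
    split
    · exact (BoundedFormula.IsAtomic.equal _ _).isQF
    · exact BoundedFormula.IsQF.top

lemma mem_touch_inl_left {M : Type u} (p : M × M) : p.1 ∈ (touchCond (L := L) (Sum.inl p)) := by
  simp [touchCond]

lemma mem_touch_inl_right {M : Type u} (p : M × M) : p.2 ∈ (touchCond (L := L) (Sum.inl p)) := by
  simp [touchCond]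

lemma mem_touch_inr_val {M : Type u} (q : Σ n : ℕ, L.Functions n × (Fin n → M) × M) :
    q.2.2.2 ∈ (touchCond (L := L) (Sum.inr q)) := by
  simp [touchCond]

lemma mem_touch_inr_arg {M : Type u} (q : Σ n : ℕ, L.Functions n × (Fin n → M) × M)
    (j : Fin q.1) : q.2.2.1 j ∈ (touchCond (L := L) (Sum.inr q)) := by
  classical
  rw [touchCond]
  exact Finset.mem_insert_of_mem (Finset.mem_image_of_mem _ (Finset.mem_univ j))

/-- In `M` itself, each condition's formula is realized by the tautological assignment. -/
lemma condForm_realize_self (c0 : L.Constants) {M : Type u} [L.Structure M] (E : Finset M)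
    (c : Cond L M) (hsub : touchCond c ⊆ E) (v : Empty → M) :
    (condForm c0 E c).Realize v (fun j => (E.equivFin.symm j : M)) := by
  have hval : ∀ (m : M), m ∈ E →
      (vtermOf c0 E m).realize (Sum.elim v fun j => (E.equivFin.symm j : M)) = m := by
    intro m h
    rw [vtermOf_realize c0 E v _ h, Equiv.symm_apply_apply]
  rcases c with p | q
  · by_cases h : p.1 = p.2
    · rw [condForm, if_pos h]
      exact BoundedFormula.realize_top.2 trivial
    · rw [condForm, if_neg h, BoundedFormula.realize_not, BoundedFormula.realize_bdEqual,
        hval _ (hsub (mem_touch_inl_left p)), hval _ (hsub (mem_touch_inl_right p))]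
      exact h
  · by_cases h : funMap q.2.1 q.2.2.1 = q.2.2.2
    · rw [condForm, if_pos h, BoundedFormula.realize_bdEqual,
        hval _ (hsub (mem_touch_inr_val q))]
      rw [show Term.realize (Sum.elim v fun j => (E.equivFin.symm j : M))
            (Term.func q.2.1 fun j => vtermOf c0 E (q.2.2.1 j)) =
          funMap q.2.1 fun j => Term.realize (Sum.elim v fun j => (E.equivFin.symm j : M))
            (vtermOf c0 E (q.2.2.1 j)) from rfl]
      rw [← h]
      congr 1
      funext j
      rw [hval _ (hsub (mem_touch_inr_arg q j))]
    · rw [condForm, if_neg h]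
      exact BoundedFormula.realize_top.2 trivial

/-- If the formula of a condition is realized in `A`, any map compatible with the
assignment satisfies the condition. -/
lemma satCond_of_condForm_realize (c0 : L.Constants) {M : Type u} [L.Structure M] (E : Finset M)
    (c : Cond L M) (hsub : touchCond c ⊆ E) {A : Type u} [L.Structure A] (v : Empty → A)
    (xs : Fin E.card → A) (f : M → A) (hf : ∀ (m : M) (h : m ∈ E), f m = xs (E.equivFin ⟨m, h⟩))
    (hreal : (condForm c0 E c).Realize v xs) : SatCond c f := by
  have hval : ∀ (m : M), m ∈ E →
      (vtermOf c0 E m).realize (Sum.elim v xs) = f m := by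
    intro m h
    rw [vtermOf_realize c0 E v _ h, hf m h]
  rcases c with p | q
  · intro hne
    rw [condForm, if_neg hne, BoundedFormula.realize_not, BoundedFormula.realize_bdEqual,
      hval _ (hsub (mem_touch_inl_left p)), hval _ (hsub (mem_touch_inl_right p))] at hreal
    exact hreal
  · intro heq
    rw [condForm, if_pos heq, BoundedFormula.realize_bdEqual,
      hval _ (hsub (mem_touch_inr_val q))] at hreal
    rw [show Term.realize (Sum.elim v xs)
          (Term.func q.2.1 fun j => vtermOf c0 E (q.2.2.1 j)) =
        funMap q.2.1 fun j => Term.realize (Sum.elim v xs) (vtermOf c0 E (q.2.2.1 j)) from rfl]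
      at hreal
    rw [hreal]
    congr 1
    funext j
    exact hval _ (hsub (mem_touch_inr_arg q j))

/-- Łoś–Tarski-style lemma: a structure satisfying all universal sentences true throughout a
universal class `K` belongs to `K`. -/
lemma mem_of_universalClass [L.IsAlgebraic] (hc : Nonempty L.Constants)
    {K : Set (Alg L)} (hK : IsUniversalClass K) (M : Type u) [L.Structure M]
    (hM : ∀ (k : ℕ) (ψ : L.BoundedFormula Empty k), ψ.IsQF →
      (∀ A ∈ K, A.carrier ⊨ ψ.alls) → M ⊨ ψ.alls) :
    Alg.mk M ∈ K := by
  classical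
  obtain ⟨c0⟩ := hc
  have main : ∀ i : Finset (Cond L M), ∃ A ∈ K, ∃ f : M → A.carrier, ∀ c ∈ i, SatCond c f := by
    intro i
    set E : Finset M := i.sup touchCond with hE
    have hsub : ∀ c ∈ i, touchCond c ⊆ E := fun c hc => Finset.le_sup hc
    set ψ : L.BoundedFormula Empty E.card :=
      (i.toList.map (condForm c0 E)).foldr (· ⊓ ·) ⊤ with hψ
    have hψQF : ψ.IsQF := by
      refine isQF_foldr_inf _ fun φ hφ => ?_
      obtain ⟨c, _, rfl⟩ := List.mem_map.1 hφ
      exact condForm_isQF c0 E c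
    have hEx : ∃ A ∈ K, ∃ xs : Fin E.card → A.carrier,
        ψ.Realize (default : Empty → A.carrier) xs := by
      by_contra hne
      push_neg at hne
      have hKall : ∀ A ∈ K, A.carrier ⊨ (∼ψ).alls := by
        intro A hA
        rw [Sentence.Realize, BoundedFormula.realize_alls]
        intro xs
        rw [BoundedFormula.realize_not]
        exact hne A hA xs
      have hMall := hM _ (∼ψ) hψQF.not hKall
      rw [Sentence.Realize, BoundedFormula.realize_alls] at hMall
      have h2 := hMall (fun j => (E.equivFin.symm j : M))
      rw [BoundedFormula.realize_not] at h2
      apply h2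
      rw [hψ, BoundedFormula.realize_foldr_inf]
      intro φ hφ
      obtain ⟨c, hci, rfl⟩ := List.mem_map.1 hφ
      exact condForm_realize_self c0 E c (hsub c (Finset.mem_toList.1 hci)) _
    obtain ⟨A, hA, xs, hxs⟩ := hEx
    have : Nonempty A.carrier := nonempty_of_constants ⟨c0⟩ _
    refine ⟨A, hA, fun m => if h : m ∈ E then xs (E.equivFin ⟨m, h⟩) else Classical.arbitrary _,
      fun c hci => ?_⟩
    refine satCond_of_condForm_realize c0 E c (hsub c hci) default xs _
      (fun m h => dif_pos h) ?_
    rw [hψ, BoundedFormula.realize_foldr_inf] at hxs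
    exact hxs _ (List.mem_map.2 ⟨c, Finset.mem_toList.2 hci, rfl⟩)
  choose A hA f hf using main
  haveI : Nonempty (Finset (Cond L M)) := ⟨∅⟩
  classical
  let U : Ultrafilter (Finset (Cond L M)) := Ultrafilter.of Filter.atTop
  have memU : ∀ c : Cond L M, {i | c ∈ i} ∈ U := by
    intro c
    apply Ultrafilter.of_le Filter.atTop
    refine Filter.mem_of_superset (Filter.mem_atTop {c}) ?_
    intro i hi
    exact hi (Finset.mem_singleton_self c)
  let Q := (U : Filter (Finset (Cond L M))).Product (fun i => (A i).carrier)
  have hQ : Alg.mk Q ∈ K := hK.2.2 _ U _ (fun i => hA i)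
  let g : M ↪[L] Q :=
    { toFun := fun m => (↑(fun i => f i m) : Q)
      inj' := by
        intro m m' h
        by_contra hne
        have h1 : ∀ᶠ i in (U : Filter (Finset (Cond L M))), f i m = f i m' :=
          Quotient.exact' h
        have h2 : ∀ᶠ i in (U : Filter (Finset (Cond L M))), Sum.inl (m, m') ∈ i := memU _
        obtain ⟨i, hi1, hi2⟩ := (h1.and h2).exists
        exact hf i _ hi2 hne hi1
      map_fun' := by
        intro n F x
        show (↑(fun i => f i (funMap F x)) : Q) = funMap F fun j => (↑(fun i => f i (x j)) : Q)
        rw [Ultraproduct.funMap_cast]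
        apply Quotient.sound'
        have h2 : ∀ᶠ i in (U : Filter (Finset (Cond L M))),
            (Sum.inr ⟨n, F, x, funMap F x⟩ : Cond L M) ∈ i := memU _
        refine h2.mono fun i hi => ?_
        exact hf i _ hi rfl
      map_rel' := fun r _ => isEmptyElim r }
  have hrange : Alg.mk (↥g.toHom.range) ∈ K := hK.2.1 (Alg.mk Q) hQ _
  exact hK.1 _ hrange M ⟨g.equivRange.symm⟩

/-- Every model of a cotheory of `theoryOf K` belongs to the universal class `K`. -/
lemma mem_of_models_cotheory [L.IsAlgebraic] (hc : Nonempty L.Constants)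
    {K : Set (Alg L)} (hK : IsUniversalClass K) {T' : L.Theory}
    (hco : AreCotheories (theoryOf K) T') (N : Type u) [L.Structure N] [Nonempty N]
    (hN : N ⊨ T') : Alg.mk N ∈ K := by
  refine mem_of_universalClass hc hK N fun k ψ hψ hKψ => ?_
  have hmem : ψ.alls ∈ theoryOf K := fun A hA => hKψ A hA
  have h1 : Entails (theoryOf K) ψ.alls := by
    intro P _ _ hP
    haveI := hP
    exact Theory.realize_sentence_of_mem (theoryOf K) hmem
  exact (hco _ ⟨k, ψ, hψ, rfl⟩).1 h1 N hN

/-- Any model of `theoryOf K` embeds in a model of the model completion. -/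
lemma exists_model_extension [L.IsAlgebraic] {K : Set (Alg L)} {T' : L.Theory}
    (hmc : IsModelCompletion (theoryOf K) T')
    (M : Type u) [L.Structure M] [Nonempty M] (hM : M ⊨ theoryOf K) :
    ∃ (N : Type u) (_ : L.Structure N), Nonempty N ∧ (N ⊨ T') ∧ Nonempty (M ↪[L] N) := by
  obtain ⟨N0⟩ := (hmc.2 M hM).1
  letI iN : L.Structure N0 := (L.lhomWithConstants M).reduct N0
  haveI : (L.lhomWithConstants M).IsExpansionOn N0 :=
    LHom.isExpansionOn_reduct (L.lhomWithConstants M) N0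
  have hdiag : (N0 : Type u) ⊨ diagram L M := N0.is_model.mono Set.subset_union_right
  have hN0T' : (N0 : Type u) ⊨ T' := by
    have h1 : (N0 : Type u) ⊨ (L.lhomWithConstants M).onTheory T' :=
      N0.is_model.mono Set.subset_union_left
    rwa [LHom.onTheory_model] at h1
  refine ⟨N0, iN, inferInstance, hN0T', ⟨?_⟩⟩
  refine { toFun := fun m => ((L.con m : L[[M]].Constants) : N0)
           inj' := ?_
           map_fun' := ?_
           map_rel' := fun r _ => isEmptyElim r }
  · intro m m' hmm'
    by_contra hne
    have hσ : (∼(Term.bdEqual (Constants.term (L.con m))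
        (Constants.term (L.con m')) : L[[M]].Sentence)) ∈ diagram L M := by
      refine ⟨((BoundedFormula.IsAtomic.equal _ _).isQF).not, ?_⟩
      simp only [Sentence.Realize, Formula.Realize, BoundedFormula.realize_not,
        BoundedFormula.realize_bdEqual, Term.realize_constants]
      exact fun h => hne h
    haveI := hdiag
    have h2 := Theory.realize_sentence_of_mem (M := (N0 : Type u)) (diagram L M) hσ
    simp only [Sentence.Realize, Formula.Realize, BoundedFormula.realize_not,
      BoundedFormula.realize_bdEqual, Term.realize_constants] at h2
    exact h2 hmm'
  · intro n F x
    have hσ : ((Term.bdEqual (Constants.term (L.con (funMap F x)))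
        (Term.func ((L.lhomWithConstants M).onFunction F)
          (fun j => Constants.term (L.con (x j)))) : L[[M]].Sentence)) ∈ diagram L M := by
      refine ⟨(BoundedFormula.IsAtomic.equal _ _).isQF, ?_⟩
      simp only [Sentence.Realize, Formula.Realize, BoundedFormula.realize_bdEqual,
        Term.realize_constants, Term.realize_func, LHom.map_onFunction]
      rfl
    haveI := hdiag
    have h2 := Theory.realize_sentence_of_mem (M := (N0 : Type u)) (diagram L M) hσ
    simp only [Sentence.Realize, Formula.Realize, BoundedFormula.realize_bdEqual,
      Term.realize_constants, Term.realize_func, LHom.map_onFunction] at h2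
    exact h2

/-- The sentence with constants from `β` expressing `∀ z, ξ(b, z)`. -/
noncomputable def phiCon (m : ℕ) (ξ : L.Formula (Fin 4 ⊕ Fin m))
    {β : Type u} (b : Fin 4 → β) : L[[β]].Sentence :=
  Formula.iAlls (Fin m)
    (((L.lhomWithConstants β).onFormula ξ).subst
      (Sum.elim (fun j => Constants.term (L.con (b j))) (fun i => Term.var (Sum.inr i))))

lemma phiCon_realize (m : ℕ) (ξ : L.Formula (Fin 4 ⊕ Fin m))
    {β : Type u} (b : Fin 4 → β) (N : Type u) [L[[β]].Structure N] [L.Structure N]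
    [(L.lhomWithConstants β).IsExpansionOn N] :
    N ⊨ phiCon m ξ b ↔
      ∀ w : Fin m → N, ξ.Realize (Sum.elim (fun j => ((L.con (b j)) : N)) w) := by
  simp only [phiCon, Sentence.Realize, Formula.realize_iAlls, Sum.elim_inr]
  refine forall_congr' fun w => ?_
  have e1 : Formula.Realize (((L.lhomWithConstants β).onFormula ξ).subst
        (Sum.elim (fun j => Constants.term (L.con (b j))) (fun i => Term.var (Sum.inr i))))
        (fun a => Sum.elim (default : Empty → N) w a) ↔
      Formula.Realize ((L.lhomWithConstants β).onFormula ξ)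
        (fun a => (Sum.elim (fun j : Fin 4 =>
          (Constants.term (L.con (b j)) : L[[β]].Term (Empty ⊕ Fin m)))
          (fun i => Term.var (Sum.inr i)) a).realize (fun a => Sum.elim (default : Empty → N) w a)) :=
    BoundedFormula.realize_subst
  have e2 : (fun a => (Sum.elim (fun j : Fin 4 =>
      (Constants.term (L.con (b j)) : L[[β]].Term (Empty ⊕ Fin m)))
      (fun i => Term.var (Sum.inr i)) a).realize (fun a => Sum.elim (default : Empty → N) w a)) =
      Sum.elim (fun j => ((L.con (b j)) : N)) w := by
    funext a
    rcases a with j | j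
    · exact Term.realize_constants
    · rfl
  rw [e2] at e1
  exact e1.trans ((L.lhomWithConstants β).realize_onFormula ξ)

lemma formula_realize_foldr_inf {M' : Type*} [L.Structure M'] {α : Type*}
    (l : List (L.Formula α)) (v : α → M') :
    (l.foldr (· ⊓ ·) ⊤).Realize v ↔ ∀ φ ∈ l, φ.Realize v :=
  BoundedFormula.realize_foldr_inf l v default

/-- With constants interpreted along an embedding, the codomain models the diagram. -/
lemma models_diagram {M N : Type u} [L.Structure M] [iN : L.Structure N] (h : M ↪[L] N) :
    letI : (constantsOn M).Structure N := constantsOn.structure (fun x => h x)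
    N ⊨ diagram L M := by
  letI : (constantsOn M).Structure N := constantsOn.structure (fun x => h x)
  have e2 : M ↪[L[[M]]] N :=
    { toEmbedding := h.toEmbedding
      map_fun' := by
        rintro n (f | c) x
        · exact h.map_fun' f x
        · cases n with
          | zero => rfl
          | succ k => exact isEmptyElim c
      map_rel' := by
        rintro n (r | r) x
        · exact h.map_rel' r x
        · exact isEmptyElim r }
  refine (Theory.model_iff _).2 fun φ hφ => ?_
  exact (sentence_realize_embedding e2 hφ.1).2 hφ.2

end Aux

/-- Proposition 5.1. Let `K` be a universal class of algebras over an algebraic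
first-order language `L` with parametrically definable principal congruences. If the first-order
theory of `K` has a model completion, then `K` has quantifier-free definable principal
congruences. -/
theorem qfdpc_of_hasModelCompletion
    (L : FirstOrder.Language.{u, u}) [L.IsAlgebraic] (hc : Nonempty L.Constants)
    (K : Set (Alg L)) (hK : IsUniversalClass K) (hPDPC : PDPC K) :
    HasModelCompletion K → QFDPC K := by
  intro hHMC
  classical
  obtain ⟨T', hmc⟩ := hHMC
  obtain ⟨m, ξ, hξQF, hξ⟩ := hPDPC
  have hco : AreCotheories (theoryOf K) T' := hmc.1.2
  set γ : Type u := ULift.{u} (Fin 4) with hγ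
  set Tγ : L[[γ]].Theory := (L.lhomWithConstants γ).onTheory T' with hTγ
  set Φγ : L[[γ]].Sentence := phiCon m ξ (fun j => (ULift.up j : γ)) with hΦγ
  set Sig : L[[γ]].Theory :=
    {σ | (∃ ψ : L.Formula γ, ψ.IsQF ∧ σ = Formula.equivSentence ψ) ∧ (Tγ ∪ {Φγ}) ⊨ᵇ σ}
    with hSig
  -- Claim A: the quantifier-free consequences of `Φγ` over `T'` entail `Φγ`.
  have claimA : ¬ Theory.IsSatisfiable (Tγ ∪ Sig ∪ {Φγ.not}) := by
    intro hsat
    obtain ⟨N⟩ := hsat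
    haveI hNmod := N.is_model
    letI iN : L.Structure N := (L.lhomWithConstants γ).reduct N
    haveI : (L.lhomWithConstants γ).IsExpansionOn N :=
      LHom.isExpansionOn_reduct (L.lhomWithConstants γ) N
    have hNT' : (N : Type u) ⊨ T' := by
      have h1 : (N : Type u) ⊨ Tγ :=
        hNmod.mono (Set.Subset.trans Set.subset_union_left Set.subset_union_left)
      rwa [LHom.onTheory_model] at h1
    have hNK : Alg.mk (N : Type u) ∈ K := mem_of_models_cotheory hc hK hco N hNT'
    set abar : Fin 4 → (N : Type u) :=
      (fun j => ((L.con (ULift.up j : γ) : L[[γ]].Constants) : N)) with habar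
    set S : L.Substructure (N : Type u) := Substructure.closure L (Set.range abar) with hS
    have hSK : Alg.mk (↥S) ∈ K := hK.2.1 _ hNK S
    haveI hSne : Nonempty (↥S) := ⟨⟨abar 0, Substructure.subset_closure (Set.mem_range_self 0)⟩⟩
    have hSmod : (↥S) ⊨ theoryOf K := model_theoryOf hSK
    have hcomp := hmc.2 (↥S) hSmod
    letI : (constantsOn (↥S)).Structure N := constantsOn.structure (fun x => S.subtype x)
    haveI hND : (N : Type u) ⊨ (L.lhomWithConstants (↥S)).onTheory T' ∪ diagram L (↥S) :=
      Theory.Model.union ((LHom.onTheory_model _ _).2 hNT') (models_diagram S.subtype)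
    set b4 : Fin 4 → (↥S) :=
      (fun j => ⟨abar j, Substructure.subset_closure (Set.mem_range_self j)⟩) with hb4
    set ΦS : L[[↥S]].Sentence := phiCon m ξ b4 with hΦS
    have hNnotγ : ¬ ((N : Type u) ⊨ Φγ) := by
      have h1 := Theory.realize_sentence_of_mem (M := (N : Type u)) (Tγ ∪ Sig ∪ {Φγ.not})
        (Set.mem_union_right _ rfl)
      rw [Sentence.realize_not] at h1
      exact h1
    have hNnotS : ¬ ((N : Type u) ⊨ ΦS) := by
      intro hS2
      apply hNnotγ
      rw [hΦS, phiCon_realize] at hS2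
      refine (phiCon_realize m ξ (fun j => (ULift.up j : γ)) (N : Type u)).2 fun w => ?_
      have h := hS2 w
      have hcc : (fun j : Fin 4 => ((L.con (b4 j) : L[[↥S]].Constants) : N)) =
          fun j : Fin 4 => ((L.con (ULift.up j : γ) : L[[γ]].Constants) : N) := rfl
      rw [hcc] at h
      exact h
    rcases hcomp.2 ΦS with hyes | hno
    · exact hNnotS (hyes.realize_sentence (N : Type u))
    · obtain ⟨T0S, hT0Ssub, hT0S⟩ := Theory.models_iff_finset_models.1 hno
      have hterm : ∀ x : ↥S, ∃ t : L.Term γ,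
          t.realize (fun g : γ => ((L.con g : L[[γ]].Constants) : N)) = (x : N) := by
        intro x
        obtain ⟨t, ht⟩ := Substructure.mem_closure_iff_exists_term.1 x.2
        refine ⟨t.relabel (fun y => ULift.up (Classical.choose y.2)), ?_⟩
        rw [Term.realize_relabel, ← ht]
        congr 1
        funext y
        exact Classical.choose_spec y.2
      choose tm htm using hterm
      set trS : L[[↥S]].Sentence → L.Formula γ :=
        (fun χ => (Formula.equivSentence.symm χ).subst tm) with htrS
      set diagL : List (L[[↥S]].Sentence) :=
        (T0S.filter (fun χ => χ ∈ diagram L (↥S))).toList with hdiagL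
      set eqL : List (L.Formula γ) := ((List.finRange 4).map
        (fun j => Term.equal (tm (b4 j)) (Term.var (ULift.up j)))) with heqL
      set ψN : L.Formula γ := ((diagL.map trS ++ eqL).foldr (· ⊓ ·) ⊤) with hψN
      have hdiagQF : ∀ χ ∈ diagL, BoundedFormula.IsQF χ ∧ (↥S) ⊨ χ := by
        intro χ hχ
        have h1 := Finset.mem_toList.1 hχ
        rw [Finset.mem_filter] at h1
        exact ⟨h1.2.1, h1.2.2⟩
      have hψNQF : ψN.IsQF := by
        refine isQF_foldr_inf _ fun φ hφ => ?_
        rcases List.mem_append.1 hφ with h | h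
        · obtain ⟨χ, hχ, rfl⟩ := List.mem_map.1 h
          exact isQF_subst (isQF_equivSentence_symm (hdiagQF χ hχ).1) _
        · obtain ⟨j, _, rfl⟩ := List.mem_map.1 h
          exact (BoundedFormula.IsAtomic.equal _ _).isQF
      have hσmem : Formula.equivSentence (ψN.not) ∈ Sig := by
        refine ⟨⟨ψN.not, hψNQF.not, rfl⟩, ?_⟩
        rw [Theory.models_sentence_iff]
        intro P
        haveI hPM := P.is_model
        letI iP : L.Structure P := (L.lhomWithConstants γ).reduct P
        haveI : (L.lhomWithConstants γ).IsExpansionOn P :=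
          LHom.isExpansionOn_reduct (L.lhomWithConstants γ) P
        by_contra hPψ
        rw [Formula.realize_equivSentence, Formula.realize_not] at hPψ
        push_neg at hPψ
        have hP2 : ∀ φ ∈ (diagL.map trS ++ eqL),
            φ.Realize (fun a : γ => ((L.con a : L[[γ]].Constants) : P)) :=
          (formula_realize_foldr_inf _ _).1 hPψ
        have hPT' : (P : Type u) ⊨ T' := by
          have h1 : (P : Type u) ⊨ Tγ := hPM.mono Set.subset_union_left
          rwa [LHom.onTheory_model] at h1
        have hPΦ : (P : Type u) ⊨ Φγ :=
          Theory.realize_sentence_of_mem (Tγ ∪ {Φγ}) (Set.mem_union_right _ rfl)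
        letI : (constantsOn (↥S)).Structure P :=
          constantsOn.structure
            (fun x => (tm x).realize (fun a : γ => ((L.con a : L[[γ]].Constants) : P)))
        haveI hPT0 : (P : Type u) ⊨ (T0S : L[[↥S]].Theory) := by
          refine (Theory.model_iff _).2 fun χ hχ => ?_
          rcases hT0Ssub hχ with hχT | hχD
          · haveI : (P : Type u) ⊨ (L.lhomWithConstants (↥S)).onTheory T' :=
              (LHom.onTheory_model _ _).2 hPT'
            exact Theory.realize_sentence_of_mem _ hχT
          · have hmem2 : trS χ ∈ diagL.map trS ++ eqL :=
              List.mem_append.2 (Or.inl (List.mem_map.2 ⟨χ, Finset.mem_toList.2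
                (Finset.mem_filter.2 ⟨Finset.mem_coe.1 hχ, hχD⟩), rfl⟩))
            have h3 := hP2 _ hmem2
            rw [htrS] at h3
            have h4 : (Formula.equivSentence.symm χ).Realize
                (fun x : ↥S => (tm x).realize
                  (fun a : γ => ((L.con a : L[[γ]].Constants) : P))) :=
              BoundedFormula.realize_subst.1 h3
            exact (Formula.realize_equivSentence_symm _ χ _).1 h4
        have hPnotS := hT0S.realize_sentence (P : Type u)
        rw [Sentence.realize_not] at hPnotS
        apply hPnotS
        refine (phiCon_realize m ξ b4 (P : Type u)).2 fun w => ?_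
        have h5 := (phiCon_realize m ξ (fun j => (ULift.up j : γ)) (P : Type u)).1 hPΦ w
        have h6 : (fun j : Fin 4 => ((L.con (b4 j) : L[[↥S]].Constants) : P)) =
            fun j : Fin 4 => ((L.con (ULift.up j : γ) : L[[γ]].Constants) : P) := by
          funext j
          have heq := hP2 _ (List.mem_append.2 (Or.inr
            (List.mem_map.2 ⟨j, List.mem_finRange j, rfl⟩)))
          rw [Formula.realize_equal] at heq
          exact heq
        rw [h6]
        exact h5
      have hNσ := Theory.realize_sentence_of_mem (M := (N : Type u)) (Tγ ∪ Sig ∪ {Φγ.not})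
        (Set.mem_union_left _ (Set.mem_union_right _ hσmem))
      rw [Formula.realize_equivSentence, Formula.realize_not] at hNσ
      apply hNσ
      refine (formula_realize_foldr_inf _ _).2 fun φ hφ => ?_
      rcases List.mem_append.1 hφ with h | h
      · obtain ⟨χ, hχ, rfl⟩ := List.mem_map.1 h
        have h7 : (N : Type u) ⊨ χ := by
          have hNχ : (↥S) ⊨ χ := (hdiagQF χ hχ).2
          haveI := hND
          exact Theory.realize_sentence_of_mem
            ((L.lhomWithConstants (↥S)).onTheory T' ∪ diagram L (↥S))
            (Set.mem_union_right _ ⟨(hdiagQF χ hχ).1, hNχ⟩)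
        rw [htrS]
        have h8 : (fun x : ↥S => (tm x).realize
            (fun a : γ => ((L.con a : L[[γ]].Constants) : N))) =
            (fun x : ↥S => (S.subtype x : N)) := by
          funext x
          exact htm x
        refine BoundedFormula.realize_subst.2 ?_
        rw [h8]
        exact (Formula.realize_equivSentence_symm _ χ _).2 h7
      · obtain ⟨j, _, rfl⟩ := List.mem_map.1 h
        rw [Formula.realize_equal]
        have h9 := htm (b4 j)
        exact h9
  -- Extract the finite conjunction via compactness.
  have hent : (Tγ ∪ Sig) ⊨ᵇ Φγ := (Theory.models_iff_not_satisfiable Φγ).2 claimA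
  obtain ⟨T0, hT0sub, hT0⟩ := Theory.models_iff_finset_models.1 hent
  set S0 : Finset (L[[γ]].Sentence) := T0.filter (fun σ => σ ∈ Sig) with hS0
  have hS0w : ∀ σ : {x // x ∈ S0}, ∃ ψ : L.Formula γ, ψ.IsQF ∧
      (σ : L[[γ]].Sentence) = Formula.equivSentence ψ ∧
      (Tγ ∪ {Φγ}) ⊨ᵇ (σ : L[[γ]].Sentence) := by
    intro σ
    have h1 := Finset.mem_filter.1 σ.2
    obtain ⟨⟨ψ, hψQF, hψeq⟩, hmod⟩ := h1.2
    exact ⟨ψ, hψQF, hψeq, hmod⟩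
  choose ψf hψfQF hψfeq hψfmod using hS0w
  set α₀ : L.Formula γ := ((S0.attach.toList.map ψf).foldr (· ⊓ ·) ⊤) with hα₀
  have hα₀QF : α₀.IsQF := by
    refine isQF_foldr_inf _ fun φ hφ => ?_
    obtain ⟨σ, _, rfl⟩ := List.mem_map.1 hφ
    exact hψfQF σ
  have hαQF : (α₀.relabel (fun g : γ => g.down)).IsQF := hα₀QF.relabel _
  refine ⟨α₀.relabel (fun g : γ => g.down), hαQF, fun A hA a₁ a₂ b₁ b₂ => ?_⟩
  haveI : Nonempty A.carrier := nonempty_of_constants hc _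
  rw [hξ A hA a₁ a₂ b₁ b₂]
  constructor
  · -- parametric condition implies the quantifier-free formula
    intro hall
    obtain ⟨N, iN, hNe, hNT', ⟨emb⟩⟩ := exists_model_extension hmc A.carrier (model_theoryOf hA)
    haveI := hNe
    have hNK : Alg.mk N ∈ K := mem_of_models_cotheory hc hK hco N hNT'
    letI : (constantsOn γ).Structure N :=
      constantsOn.structure (fun g => emb (![a₁, a₂, b₁, b₂] g.down))
    have hNTγ : N ⊨ Tγ := (LHom.onTheory_model _ _).2 hNT'
    have hNΦ : N ⊨ Φγ :=
      (phiCon_realize m ξ (fun j => (ULift.up j : γ)) N).2 fun w =>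
        hall (Alg.mk N) hNK emb w
    haveI : N ⊨ (Tγ ∪ {Φγ}) := Theory.Model.union hNTγ ((Theory.model_singleton_iff).2 hNΦ)
    have hψreal : ∀ σ : {x // x ∈ S0},
        (ψf σ).Realize (fun g : γ => ((L.con g : L[[γ]].Constants) : N)) := by
      intro σ
      have h2 := (hψfmod σ).realize_sentence N
      rw [hψfeq σ, Formula.realize_equivSentence] at h2
      exact h2
    have hα₀N : α₀.Realize (fun g : γ => ((L.con g : L[[γ]].Constants) : N)) := by
      refine (formula_realize_foldr_inf _ _).2 fun φ hφ => ?_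
      obtain ⟨σ, _, rfl⟩ := List.mem_map.1 hφ
      exact hψreal σ
    have hα₁ : (α₀.relabel (fun g : γ => g.down)).Realize
        (⇑emb ∘ ![a₁, a₂, b₁, b₂]) := by
      rw [Formula.realize_relabel]
      exact hα₀N
    exact (formula_realize_embedding emb hαQF _).1 hα₁
  · -- the quantifier-free formula implies the parametric condition
    intro hα B hB g w
    haveI : Nonempty B.carrier := nonempty_of_constants hc _
    obtain ⟨N, iN, hNe, hNT', ⟨emb⟩⟩ := exists_model_extension hmc B.carrier (model_theoryOf hB)
    haveI := hNe
    letI : (constantsOn γ).Structure N :=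
      constantsOn.structure (fun g' => emb (g (![a₁, a₂, b₁, b₂] g'.down)))
    have hNTγ : N ⊨ Tγ := (LHom.onTheory_model _ _).2 hNT'
    have hembα : (α₀.relabel (fun g' : γ => g'.down)).Realize
        (⇑(emb.comp g) ∘ ![a₁, a₂, b₁, b₂]) :=
      (formula_realize_embedding (emb.comp g) hαQF _).2 hα
    have hα₀N : α₀.Realize (fun g' : γ => ((L.con g' : L[[γ]].Constants) : N)) := by
      rw [Formula.realize_relabel] at hembα
      exact hembα
    haveI hNT0 : N ⊨ (T0 : L[[γ]].Theory) := by
      refine (Theory.model_iff _).2 fun σ hσ => ?_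
      rcases hT0sub hσ with h | h
      · haveI : N ⊨ Tγ := hNTγ
        exact Theory.realize_sentence_of_mem Tγ h
      · have hmemS0 : σ ∈ S0 := Finset.mem_filter.2 ⟨Finset.mem_coe.1 hσ, h⟩
        have heq : σ = Formula.equivSentence (ψf ⟨σ, hmemS0⟩) := hψfeq ⟨σ, hmemS0⟩
        rw [heq, Formula.realize_equivSentence]
        exact (formula_realize_foldr_inf _ _).1 hα₀N _
          (List.mem_map.2 ⟨⟨σ, hmemS0⟩, Finset.mem_toList.2 (S0.mem_attach _), rfl⟩)
    have hNΦ : N ⊨ Φγ := hT0.realize_sentence N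
    have h5 := (phiCon_realize m ξ (fun j => (ULift.up j : γ)) N).1 hNΦ (fun j => emb (w j))
    refine (formula_realize_embedding emb hξQF _).1 ?_
    have h6 : (⇑emb ∘ Sum.elim (fun i => g (![a₁, a₂, b₁, b₂] i)) w) =
        Sum.elim (fun j : Fin 4 => ((L.con (ULift.up j : γ) : L[[γ]].Constants) : N))
          (fun j => emb (w j)) := by
      funext a
      rcases a with i | i
      · rfl
      · rfl
    rw [h6]
    exact h5

end Paper
end

section
/- Let V be a variety of algebras over an algebraic first-order language L that has the congruence extension property and a guarded deduction theorem. Then V has parametrically definable principal congruences. -/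
namespace Paper

open FirstOrder FirstOrder.Language FirstOrder.Language.Structure

universe u

variable {L : FirstOrder.Language.{u, u}}

/-! ### Auxiliary infrastructure for the proof of Proposition 5.7 -/

section Aux

universe v

/-- Term algebra structure over an arbitrary universe of variables. -/
instance termStructureU (α : Type u) : L.Structure (L.Term α) where
  funMap := Term.func
  RelMap _ _ := False

lemma realize_var_id {α : Type u} (t : L.Term α) : t.realize Term.var = t := by
  induction t with
  | var => rfl
  | func f ts ih =>
    show Term.func f (fun i => (ts i).realize Term.var) = Term.func f ts
    exact congrArg _ (funext ih)

lemma realize_eqOn {β : Type v} {M : Type u} [DecidableEq β] [L.Structure M]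
    (t : L.Term β) {v w : β → M} (h : ∀ x ∈ t.varFinset, v x = w x) :
    t.realize v = t.realize w := by
  induction t with
  | var x => exact h x (by simp [Term.varFinset])
  | func f ts ih =>
    show funMap f _ = funMap f _
    refine congrArg _ (funext fun i => ih i fun x hx => h x ?_)
    simp only [Term.varFinset, Finset.mem_biUnion]
    exact ⟨i, Finset.mem_univ i, hx⟩

lemma realize_quot_mk {M : Type u} [L.Structure M] (δ : Congruence L M) {β : Type v}
    (t : L.Term β) (v : β → M) :
    t.realize (fun x => Quotient.mk δ.setoid (v x)) = Quotient.mk δ.setoid (t.realize v) := by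
  induction t with
  | var => rfl
  | func f ts ih =>
    show funMap f (fun i => (ts i).realize (fun x => Quotient.mk δ.setoid (v x)))
        = Quotient.mk δ.setoid (funMap f (fun i => (ts i).realize v))
    simp only [ih]
    show Quotient.mk δ.setoid (funMap f fun i => (Quotient.mk δ.setoid ((ts i).realize v)).out)
        = _
    refine Quotient.sound (δ.compat _ f _ _ fun i => ?_)
    have : Quotient.mk δ.setoid ((Quotient.mk δ.setoid ((ts i).realize v)).out)
        = Quotient.mk δ.setoid ((ts i).realize v) := Quotient.out_eq _
    exact @Quotient.exact _ δ.setoid _ _ this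

/-- The quotient map as a homomorphism. -/
def Congruence.mkHom [L.IsAlgebraic] {M : Type u} [L.Structure M] (δ : Congruence L M) :
    M →[L] QuotAlg δ where
  toFun := Quotient.mk δ.setoid
  map_fun' f x := by
    show Quotient.mk δ.setoid (funMap f x)
        = Quotient.mk δ.setoid (funMap f fun i => (Quotient.mk δ.setoid (x i)).out)
    refine (Quotient.sound (δ.compat _ f _ _ fun i => ?_)).symm
    exact @Quotient.exact _ δ.setoid _ _ (Quotient.out_eq _)
  map_rel' r _ := isEmptyElim r

lemma quotAlg_mem [L.IsAlgebraic] {V : Set (Alg L)} (hV : IsVariety V) {A : Alg L} (hA : A ∈ V)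
    (δ : Congruence L A.carrier) : Alg.mk (QuotAlg δ) ∈ V :=
  hV.1 A hA (QuotAlg δ) δ.mkHom (fun q => ⟨q.out, Quotient.out_eq _⟩)

lemma congGen_mono {M : Type u} [L.Structure M] {S T : Set (M × M)} (hST : S ⊆ T) {a b : M}
    (h : (congGen L M S).rel a b) : (congGen L M T).rel a b :=
  fun θ hθ => h θ fun p hp => hθ p (hST hp)

lemma congGen_finitary {M : Type u} [L.Structure M] {S : Set (M × M)} {a b : M}
    (h : (congGen L M S).rel a b) :
    ∃ S₀ ⊆ S, S₀.Finite ∧ (congGen L M S₀).rel a b := by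
  let θ : Congruence L M :=
    { rel := fun a b => ∃ S₀ ⊆ S, S₀.Finite ∧ (congGen L M S₀).rel a b
      refl := fun a => ⟨∅, Set.empty_subset _, Set.finite_empty, (congGen L M ∅).refl a⟩
      symm := fun a b ⟨S₀, h1, h2, h3⟩ => ⟨S₀, h1, h2, (congGen L M S₀).symm a b h3⟩
      trans := fun a b c ⟨S₀, h1, h2, h3⟩ ⟨S₁, g1, g2, g3⟩ =>
        ⟨S₀ ∪ S₁, Set.union_subset h1 g1, h2.union g2,
          (congGen L M (S₀ ∪ S₁)).trans a b c
            (congGen_mono Set.subset_union_left h3)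
            (congGen_mono Set.subset_union_right g3)⟩
      compat := by
        intro n f x y hxy
        choose U hU1 hU2 hU3 using hxy
        exact ⟨⋃ i, U i, Set.iUnion_subset hU1, Set.finite_iUnion hU2,
          (congGen L M _).compat n f x y fun i =>
            congGen_mono (Set.subset_iUnion U i) (hU3 i)⟩ }
  exact h θ fun p hp =>
    ⟨{p}, Set.singleton_subset_iff.2 hp, Set.finite_singleton p,
      fun θ' hθ' => hθ' p (Set.mem_singleton p)⟩

/-- Semantic consequence relative to the class `V` of the equations in `R`. -/
def SemCon (V : Set (Alg L)) {α : Type u} (R : Set (L.Term α × L.Term α)) (s t : L.Term α) :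
    Prop :=
  ∀ C ∈ V, ∀ h : α → C.carrier,
    (∀ pp ∈ R, pp.1.realize h = pp.2.realize h) → s.realize h = t.realize h

lemma semCon_mono {V : Set (Alg L)} {α : Type u} {R R' : Set (L.Term α × L.Term α)}
    (hR : R ⊆ R') {s t : L.Term α} (h : SemCon V R s t) : SemCon V R' s t :=
  fun C hC v hv => h C hC v fun pp hpp => hv pp (hR hpp)

lemma semCon_of_mem {V : Set (Alg L)} {α : Type u} {R : Set (L.Term α × L.Term α)}
    {pp : L.Term α × L.Term α} (h : pp ∈ R) : SemCon V R pp.1 pp.2 :=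
  fun _ _ v hv => hv pp h

/-- The generic model of a set of equations `R` relative to a variety `V`:
a member of `V` receiving a map from the term algebra whose kernel is exactly
semantic consequence from `R`. -/
lemma exists_env {V : Set (Alg L)} (hV : IsVariety V) {α : Type u}
    (R : Set (L.Term α × L.Term α)) :
    ∃ B : Alg L, B ∈ V ∧ ∃ ev : L.Term α → B.carrier,
      Function.Surjective ev ∧
      (∀ {n : ℕ} (f : L.Functions n) (x : Fin n → L.Term α),
        ev (Term.func f x) = funMap f (ev ∘ x)) ∧
      (∀ s t : L.Term α, ev s = ev t ↔ SemCon V R s t) := by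
  classical
  let ι := {pp : L.Term α × L.Term α // ¬ SemCon V R pp.1 pp.2}
  have hwit : ∀ i : ι, ∃ C : Alg L, C ∈ V ∧ ∃ h : α → C.carrier,
      (∀ pp ∈ R, pp.1.realize h = pp.2.realize h) ∧
      i.1.1.realize h ≠ i.1.2.realize h := by
    intro i
    have hi := i.2
    unfold SemCon at hi
    push_neg at hi
    obtain ⟨C, hC, h, hhR, hne⟩ := hi
    exact ⟨C, hC, h, hhR, hne⟩
  choose Cc hCv hh hhR hne using hwit
  let M : ι → Type u := fun i => (Cc i).carrier
  let P := ∀ i, M i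
  have hP : Alg.mk P ∈ V := hV.2.2 ι M fun i => hCv i
  let ev0 : L.Term α → P := fun t i => t.realize (hh i)
  have hev0 : ∀ {n : ℕ} (f : L.Functions n) (x : Fin n → L.Term α),
      ev0 (Term.func f x) = funMap f (ev0 ∘ x) := by
    intro n f x
    funext i
    show funMap f (fun j => (x j).realize (hh i)) = funMap f (fun j => ev0 (x j) i)
    rfl
  let SR : L.Substructure P :=
    { carrier := Set.range ev0
      fun_mem := by
        intro n f x hx
        choose tt htt using hx
        refine ⟨Term.func f tt, ?_⟩
        rw [hev0]
        exact congrArg _ (funext htt) }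
  refine ⟨Alg.mk ↥SR, hV.2.1 (Alg.mk P) hP SR, fun t => ⟨ev0 t, ⟨t, rfl⟩⟩, ?_, ?_, ?_⟩
  · rintro ⟨x, t, ht⟩
    exact ⟨t, Subtype.ext ht⟩
  · intro n f x
    exact Subtype.ext (hev0 f _)
  · intro s t
    constructor
    · intro he
      by_contra hn
      have := congrFun (congrArg Subtype.val he) ⟨(s, t), hn⟩
      exact hne ⟨(s, t), hn⟩ this
    · intro hsc
      exact Subtype.ext (funext fun i => hsc (Cc i) (hCv i) (hh i) (hhR i))

/-- Equational compactness relative to a variety. -/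
lemma semCon_compact [L.IsAlgebraic] {V : Set (Alg L)} (hV : IsVariety V) {α : Type u}
    {R : Set (L.Term α × L.Term α)} {s t : L.Term α} (h : SemCon V R s t) :
    ∃ R₀ ⊆ R, R₀.Finite ∧ SemCon V R₀ s t := by
  classical
  set Θ : Set (L.Term α × L.Term α) := {pp | SemCon V (∅ : Set (L.Term α × L.Term α)) pp.1 pp.2}
    with hΘ
  set δ := congGen L (L.Term α) (R ∪ Θ) with hδ
  -- the quotient of the term algebra by `δ` is in `V`
  obtain ⟨B, hB, ev, hsurj, hfunc, hker⟩ := exists_env hV (∅ : Set (L.Term α × L.Term α))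
  have hQ : Alg.mk (QuotAlg δ) ∈ V := by
    let j : B.carrier → QuotAlg δ := fun x => Quotient.mk δ.setoid (Classical.choose (hsurj x))
    have hj : ∀ x : B.carrier, ev (Classical.choose (hsurj x)) = x :=
      fun x => Classical.choose_spec (hsurj x)
    have hkerδ : ∀ u u' : L.Term α, ev u = ev u' → δ.rel u u' := by
      intro u u' huu
      have : SemCon V (∅ : Set (L.Term α × L.Term α)) u u' := (hker u u').1 huu
      exact congGen_mono Set.subset_union_right
        (fun θ' hθ' => hθ' (u, u') this)
    have hjmk : ∀ u : L.Term α, j (ev u) = Quotient.mk δ.setoid u := by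
      intro u
      exact Quotient.sound (hkerδ _ _ (hj (ev u)))
    let jh : B.carrier →[L] QuotAlg δ :=
      { toFun := j
        map_fun' := by
          intro n f x
          have h1 : ev (Term.func f fun i => Classical.choose (hsurj (x i))) = funMap f x := by
            rw [hfunc]
            exact congrArg _ (funext fun i => hj (x i))
          calc j (funMap f x) = j (ev (Term.func f fun i => Classical.choose (hsurj (x i)))) :=
              by rw [h1]
            _ = Quotient.mk δ.setoid (Term.func f fun i => Classical.choose (hsurj (x i))) :=
              hjmk _
            _ = funMap f (j ∘ x) := by
              show _ = Quotient.mk δ.setoid (funMap f fun i => ((j ∘ x) i).out)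
              refine Quotient.sound (δ.compat _ f _ _ fun i => ?_)
              have h2 : j (x i) = Quotient.mk δ.setoid (Classical.choose (hsurj (x i))) := rfl
              exact @Quotient.exact _ δ.setoid _ _
                (h2.symm.trans (Quotient.out_eq (j (x i))).symm)
        map_rel' := fun r _ => isEmptyElim r }
    have hjsurj : Function.Surjective j := by
      intro q
      refine ⟨ev q.out, ?_⟩
      rw [hjmk, Quotient.out_eq]
    exact hV.1 B hB (QuotAlg δ) jh hjsurj
  -- apply the hypothesis in the quotient
  have hδst : δ.rel s t := by
    have := h (Alg.mk (QuotAlg δ)) hQ (fun x => Quotient.mk δ.setoid (Term.var x)) ?_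
    · rw [realize_quot_mk δ s Term.var, realize_quot_mk δ t Term.var,
        realize_var_id, realize_var_id] at this
      exact @Quotient.exact _ δ.setoid _ _ this
    · intro pp hpp
      rw [realize_quot_mk δ _ Term.var, realize_quot_mk δ _ Term.var,
        realize_var_id, realize_var_id]
      exact Quotient.sound (fun θ' hθ' => hθ' pp (Or.inl hpp))
  obtain ⟨S₀, hS₀sub, hS₀fin, hS₀rel⟩ := congGen_finitary hδst
  refine ⟨S₀ ∩ R, Set.inter_subset_right, hS₀fin.inter_of_left R, ?_⟩
  let θ' : Congruence L (L.Term α) :=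
    { rel := fun u u' => SemCon V (S₀ ∩ R) u u'
      refl := fun u C hC v _ => rfl
      symm := fun u u' h C hC v hv => (h C hC v hv).symm
      trans := fun u u' u'' h1 h2 C hC v hv => (h1 C hC v hv).trans (h2 C hC v hv)
      compat := by
        intro n f x y hxy C hC v hv
        show funMap f (fun i => (x i).realize v) = funMap f (fun i => (y i).realize v)
        exact congrArg _ (funext fun i => hxy i C hC v hv) }
  refine hS₀rel θ' fun pp hpp => ?_
  rcases hS₀sub hpp with hppR | hppΘ
  · exact semCon_of_mem ⟨hpp, hppR⟩
  · exact semCon_mono (Set.empty_subset _) hppΘ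

/-- Transfer of a finite set of equations over an arbitrary variable set `β` into
equations over a finite variable set, preserving satisfaction both ways. -/
lemma transfer {β : Type u} (π_d : List (L.Term β × L.Term β)) (e : List β) (hne : e ≠ []) :
    ∃ (N : ℕ) (d : Fin N → β) (π'' : List (L.Term (Fin N) × L.Term (Fin N)))
      (hlen : e.length ≤ N),
      (∀ k (hk : k < e.length), d ⟨k, lt_of_lt_of_le hk hlen⟩ = e.get ⟨k, hk⟩) ∧
      (∀ (D : Type u) [L.Structure D] (vv : Fin N → D),
        (∀ ε ∈ π'', ε.1.realize vv = ε.2.realize vv) →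
        ∃ h : β → D, (∀ ε ∈ π_d, ε.1.realize h = ε.2.realize h) ∧ ∀ i, h (d i) = vv i) ∧
      (∀ (D : Type u) [L.Structure D] (g : β → D),
        (∀ ε ∈ π_d, ε.1.realize g = ε.2.realize g) →
        (∀ ε ∈ π'', ε.1.realize (g ∘ d) = ε.2.realize (g ∘ d))) := by
  classical
  set lst : List β :=
    e ++ π_d.flatMap (fun ε => ε.1.varFinset.toList ++ ε.2.varFinset.toList) with hlst
  have hpos : 0 < lst.length := by
    rw [hlst, List.length_append]
    have := List.length_pos_iff.2 hne
    omega
  set N := lst.length with hN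
  set d : Fin N → β := fun i => lst.get i with hd
  have hlen : e.length ≤ N := by rw [hN, hlst, List.length_append]; omega
  set r : β → Fin N := fun x =>
    if hx : x ∈ lst then ⟨lst.idxOf x, List.idxOf_lt_length_iff.2 hx⟩ else ⟨0, hpos⟩ with hr
  have hdr : ∀ x ∈ lst, d (r x) = x := by
    intro x hx
    rw [hr]
    simp only [dif_pos hx]
    exact List.idxOf_get _
  have hmemd : ∀ i, d i ∈ lst := fun i => List.get_mem lst ⟨i.1, i.2⟩
  set idPairs : List (L.Term (Fin N) × L.Term (Fin N)) :=
    (List.finRange N).flatMap (fun i => (List.finRange N).filterMap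
      (fun j => if d i = d j then some (Term.var i, Term.var j) else none)) with hip
  set π'' : List (L.Term (Fin N) × L.Term (Fin N)) :=
    π_d.map (fun ε => (ε.1.relabel r, ε.2.relabel r)) ++ idPairs with hπ''
  have hipmem : ∀ i j, d i = d j → (Term.var i, Term.var j) ∈ π'' := by
    intro i j hij
    rw [hπ'']
    refine List.mem_append_right _ ?_
    rw [hip]
    exact List.mem_flatMap.2 ⟨i, List.mem_finRange i,
      List.mem_filterMap.2 ⟨j, List.mem_finRange j, by rw [if_pos hij]⟩⟩
  have hvarmem : ∀ ε ∈ π_d, (∀ x ∈ ε.1.varFinset, x ∈ lst) ∧ ∀ x ∈ ε.2.varFinset, x ∈ lst := by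
    intro ε hε
    constructor <;> intro x hx <;>
    · rw [hlst]
      refine List.mem_append_right _ (List.mem_flatMap.2 ⟨ε, hε, ?_⟩)
      first
      | exact List.mem_append_left _ (Finset.mem_toList.2 hx)
      | exact List.mem_append_right _ (Finset.mem_toList.2 hx)
  refine ⟨N, d, π'', hlen, ?_, ?_, ?_⟩
  · intro k hk
    rw [hd]
    show lst.get _ = e.get ⟨k, hk⟩
    have : lst = e ++ _ := hlst
    simp [this, List.getElem_append_left hk]
  · intro D _ vv hvv
    have hid : ∀ i j, d i = d j → vv i = vv j := by
      intro i j hij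
      have := hvv (Term.var i, Term.var j) (hipmem i j hij)
      simpa using this
    refine ⟨vv ∘ r, ?_, ?_⟩
    · intro ε hε
      have := hvv (ε.1.relabel r, ε.2.relabel r)
        (by rw [hπ'']; exact List.mem_append_left _ (List.mem_map_of_mem hε))
      simpa [Term.realize_relabel] using this
    · intro i
      exact hid (r (d i)) i (hdr (d i) (hmemd i))
  · intro D _ g hg ε hε
    rw [hπ''] at hε
    rcases List.mem_append.1 hε with hε | hε
    · obtain ⟨ε₀, hε₀, rfl⟩ := List.mem_map.1 hε
      simp only [Term.realize_relabel]
      have h1 : (ε₀.1).realize (g ∘ d ∘ r) = (ε₀.1).realize g :=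
        realize_eqOn _ fun x hx => by
          rw [Function.comp_apply, Function.comp_apply, hdr x ((hvarmem ε₀ hε₀).1 x hx)]
      have h2 : (ε₀.2).realize (g ∘ d ∘ r) = (ε₀.2).realize g :=
        realize_eqOn _ fun x hx => by
          rw [Function.comp_apply, Function.comp_apply, hdr x ((hvarmem ε₀ hε₀).2 x hx)]
      exact h1.trans ((hg ε₀ hε₀).trans h2.symm)
    · rw [hip] at hε
      obtain ⟨i, _, hmem⟩ := List.mem_flatMap.1 hε
      obtain ⟨j, _, hsome⟩ := List.mem_filterMap.1 hmem
      by_cases hij : d i = d j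
      · rw [if_pos hij] at hsome
        obtain rfl := Option.some_injective _ hsome
        simpa using congrArg g hij
      · rw [if_neg hij] at hsome
        exact absurd hsome (by simp)

/-- The conjunction of a list of equations as a quantifier-free formula. -/
def conjForm {α : Type} (l : List (L.Term α × L.Term α)) : L.Formula α :=
  l.foldr (fun ε ψ => ε.1.equal ε.2 ⊓ ψ) ⊤

lemma conjForm_isQF {α : Type} (l : List (L.Term α × L.Term α)) :
    (conjForm l).IsQF := by
  induction l with
  | nil => exact BoundedFormula.IsQF.top
  | cons ε l ih =>
    exact ((BoundedFormula.IsAtomic.equal _ _).isQF).inf ih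

lemma conjForm_realize {α : Type} {M : Type u} [L.Structure M]
    (l : List (L.Term α × L.Term α)) (v : α → M) :
    (conjForm l).Realize v ↔ ConjHolds l v := by
  induction l with
  | nil => simp [conjForm, ConjHolds]
  | cons ε l ih =>
    have hc : conjForm (ε :: l) = ε.1.equal ε.2 ⊓ conjForm l := rfl
    rw [hc, Formula.realize_inf, Formula.realize_equal, ih]
    constructor
    · rintro ⟨h1, h2⟩ ε' hε'
      rcases List.mem_cons.1 hε' with rfl | hε'
      · exact h1
      · exact h2 ε' hε'
    · intro h
      exact ⟨h ε (List.mem_cons_self), fun ε' hε' => h ε' (List.mem_cons_of_mem _ hε')⟩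

lemma principalCong_map {M N : Type u} [L.Structure M] [L.Structure N] (g : M ↪[L] N)
    {a₁ a₂ b₁ b₂ : M} (h : (principalCong L M b₁ b₂).rel a₁ a₂) :
    (principalCong L N (g b₁) (g b₂)).rel (g a₁) (g a₂) := by
  intro θ hθ
  let θ' : Congruence L M :=
    { rel := fun x y => θ.rel (g x) (g y)
      refl := fun x => θ.refl _
      symm := fun x y h => θ.symm _ _ h
      trans := fun x y z h1 h2 => θ.trans _ _ _ h1 h2
      compat := by
        intro n f x y hxy
        have := θ.compat n f (fun i => g (x i)) (fun i => g (y i)) hxy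
        rw [g.map_fun, g.map_fun]
        exact this }
  exact h θ' fun p hp => by
    rw [show p = (b₁, b₂) from hp]
    exact hθ (g b₁, g b₂) rfl

lemma key_fwd [L.IsAlgebraic] {V : Set (Alg L)} (hV : IsVariety V)
    {m : ℕ} {γ fφ : List (L.Term (Fin 4 ⊕ Fin m) × L.Term (Fin 4 ⊕ Fin m))}
    (hW : GuardedDTWitness V m γ fφ) {B : Alg L} (hB : B ∈ V)
    (a₁ a₂ b₁ b₂ : B.carrier)
    (hrel : (principalCong L B.carrier b₁ b₂).rel a₁ a₂) (w : Fin m → B.carrier)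
    (hγw : ConjHolds γ (Sum.elim ![a₁, a₂, b₁, b₂] w)) :
    ConjHolds fφ (Sum.elim ![a₁, a₂, b₁, b₂] w) := by
  classical
  set Diag : Set (L.Term B.carrier × L.Term B.carrier) :=
    {pp | pp.1.realize id = pp.2.realize id} with hDiag
  set bp : L.Term B.carrier × L.Term B.carrier := (Term.var b₁, Term.var b₂) with hbp
  set R : Set (L.Term B.carrier × L.Term B.carrier) := insert bp Diag with hR
  have hsem : SemCon V R (Term.var a₁) (Term.var a₂) := by
    let θ : Congruence L B.carrier :=
      { rel := fun p q => SemCon V R (Term.var p) (Term.var q)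
        refl := fun p C hC v _ => rfl
        symm := fun p q h C hC v hv => (h C hC v hv).symm
        trans := fun p q s h1 h2 C hC v hv => (h1 C hC v hv).trans (h2 C hC v hv)
        compat := by
          intro n f x y hxy C hC v hv
          have hhom : ∀ z : Fin n → B.carrier,
              v (funMap f z) = funMap f fun j => v (z j) := by
            intro z
            have := hv (Term.var (funMap f z), Term.func f fun j => Term.var (z j))
              (Set.mem_insert_of_mem _ (by simp [hDiag, Term.realize]))
            simpa [Term.realize] using this
          show v (funMap f x) = v (funMap f y)
          rw [hhom x, hhom y]
          exact congrArg _ (funext fun i => hxy i C hC v hv) }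
    exact hrel θ fun p hp => by
      rw [show p = (b₁, b₂) from hp]
      exact semCon_of_mem (Set.mem_insert _ _)
  obtain ⟨R₀, hR₀R, hR₀fin, hsc⟩ := semCon_compact hV hsem
  have hsc2 : SemCon V (insert bp (R₀ \ {bp})) (Term.var a₁) (Term.var a₂) := by
    refine semCon_mono (fun x hx => ?_) hsc
    rcases eq_or_ne x bp with rfl | hne
    · exact Set.mem_insert _ _
    · exact Set.mem_insert_of_mem _ ⟨hx, hne⟩
  have hsub : (R₀ \ {bp}) ⊆ Diag := by
    intro x hx
    rcases Set.mem_insert_iff.1 (hR₀R hx.1) with rfl | hxD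
    · exact absurd rfl hx.2
    · exact hxD
  set π_d : List (L.Term B.carrier × L.Term B.carrier) :=
    ((hR₀fin.subset (Set.diff_subset)).toFinset).toList with hπd
  have hπdmem : ∀ x, x ∈ π_d ↔ x ∈ R₀ \ {bp} := by
    intro x
    rw [hπd, Finset.mem_toList, Set.Finite.mem_toFinset]
  obtain ⟨N, d, π'', hlen, hd, fwd, bwd⟩ := transfer π_d [a₁, a₂, b₁, b₂] (by simp)
  have h4 : (4 : ℕ) ≤ N := hlen
  let i0 : Fin N := ⟨0, by omega⟩
  let i1 : Fin N := ⟨1, by omega⟩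
  let i2 : Fin N := ⟨2, by omega⟩
  let i3 : Fin N := ⟨3, by omega⟩
  have hd0 : d i0 = a₁ := hd 0 (by norm_num)
  have hd1 : d i1 = a₂ := hd 1 (by norm_num)
  have hd2 : d i2 = b₁ := hd 2 (by norm_num)
  have hd3 : d i3 = b₂ := hd 3 (by norm_num)
  have hgdt := hW N (Term.var i0) (Term.var i1) (Term.var i2) (Term.var i3) π''
  have hLHS : ∀ C ∈ V, ∀ vv : Fin N → C.carrier, ConjHolds π'' vv →
      (Term.var i2 : L.Term (Fin N)).realize vv = (Term.var i3 : L.Term (Fin N)).realize vv →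
      (Term.var i0 : L.Term (Fin N)).realize vv = (Term.var i1 : L.Term (Fin N)).realize vv := by
    intro C hC vv hπ ht
    obtain ⟨h, hhd, hhi⟩ := fwd C.carrier vv (fun ε hε => show ε.1.realize vv = ε.2.realize vv from hπ ε hε)
    have hconc := hsc2 C hC h ?_
    · show vv i0 = vv i1
      rw [← hhi i0, ← hhi i1, hd0, hd1]
      exact hconc
    · intro pp hpp
      rcases Set.mem_insert_iff.1 hpp with rfl | hpp
      · show h b₁ = h b₂
        rw [← hd2, ← hd3, hhi i2, hhi i3]
        exact ht
      · exact hhd pp ((hπdmem pp).2 hpp)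
  have hRHS := hgdt.1.mp hLHS
  have hπd_B : ConjHolds π'' d := by
    intro ε hε
    exact bwd B.carrier id (fun ε' hε' => hsub ((hπdmem ε').1 hε')) ε hε
  have hvec : ![((Term.var i0 : L.Term (Fin N)).realize d : B.carrier),
      (Term.var i1 : L.Term (Fin N)).realize d, (Term.var i2 : L.Term (Fin N)).realize d,
      (Term.var i3 : L.Term (Fin N)).realize d] = ![a₁, a₂, b₁, b₂] := by
    funext j
    fin_cases j <;> simp [Term.realize, hd0, hd1, hd2, hd3]
  have := hRHS B hB d hπd_B w (by rw [hvec]; exact hγw)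
  rwa [hvec] at this

lemma key_bwd [L.IsAlgebraic] {V : Set (Alg L)} (hV : IsVariety V)
    {m : ℕ} {γ fφ : List (L.Term (Fin 4 ⊕ Fin m) × L.Term (Fin 4 ⊕ Fin m))}
    (hW : GuardedDTWitness V m γ fφ) {A : Alg L} (hA : A ∈ V)
    (a₁ a₂ b₁ b₂ : A.carrier)
    (H : ∀ B ∈ V, ∀ g : A.carrier ↪[L] B.carrier, ∀ w : Fin m → B.carrier,
      ConjHolds γ (Sum.elim (fun i => g (![a₁, a₂, b₁, b₂] i)) w) →
      ConjHolds fφ (Sum.elim (fun i => g (![a₁, a₂, b₁, b₂] i)) w)) :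
    (principalCong L A.carrier b₁ b₂).rel a₁ a₂ := by
  classical
  set c : Fin 4 → A.carrier := ![a₁, a₂, b₁, b₂] with hc
  set σc : Fin 4 ⊕ Fin m → A.carrier ⊕ Fin m := Sum.map c id with hσc
  set γ' : List (L.Term (A.carrier ⊕ Fin m) × L.Term (A.carrier ⊕ Fin m)) :=
    γ.map (fun ε => (ε.1.relabel σc, ε.2.relabel σc)) with hγ'
  set DiagA : Set (L.Term A.carrier × L.Term A.carrier) :=
    {pp | pp.1.realize id = pp.2.realize id} with hDiagA
  set DiagI : Set (L.Term (A.carrier ⊕ Fin m) × L.Term (A.carrier ⊕ Fin m)) :=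
    (fun pp : L.Term A.carrier × L.Term A.carrier =>
      (pp.1.relabel Sum.inl, pp.2.relabel Sum.inl)) '' DiagA with hDiagI
  set R : Set (L.Term (A.carrier ⊕ Fin m) × L.Term (A.carrier ⊕ Fin m)) :=
    DiagI ∪ {x | x ∈ γ'} with hRdef
  obtain ⟨B, hB, ev, hsurj, hfunc, hker⟩ := exists_env hV R
  have hrt : ∀ t : L.Term (A.carrier ⊕ Fin m),
      t.realize (fun x => ev (Term.var x)) = ev t := by
    intro t
    induction t with
    | var => rfl
    | func f ts ih =>
      show funMap f (fun i => (ts i).realize fun x => ev (Term.var x)) = ev (Term.func f ts)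
      rw [hfunc f ts]
      exact congrArg _ (funext fun i => ih i)
  -- the natural map from `A` into `B` as a homomorphism
  let g0 : A.carrier →[L] B.carrier :=
    { toFun := fun p => ev (Term.var (Sum.inl p))
      map_fun' := by
        intro n f x
        show ev (Term.var (Sum.inl (funMap f x)))
            = funMap f fun i => ev (Term.var (Sum.inl (x i)))
        have h1 : ev (Term.func f fun i => Term.var (Sum.inl (x i)))
            = funMap f fun i => ev (Term.var (Sum.inl (x i))) := hfunc f _
        rw [← h1]
        refine (hker _ _).2 ?_
        intro C hC v hv
        have := hv ((Term.var (funMap f x) : L.Term A.carrier).relabel Sum.inl,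
            (Term.func f fun j => Term.var (x j) : L.Term A.carrier).relabel Sum.inl)
          (Or.inl ⟨(Term.var (funMap f x), Term.func f fun j => Term.var (x j)), rfl, rfl⟩)
        simpa [Term.realize_relabel, Term.realize] using this
      map_rel' := fun r _ => isEmptyElim r }
  -- a common extraction principle via compactness
  have hextract : ∀ s t : L.Term (A.carrier ⊕ Fin m), SemCon V R s t →
      ∃ l : List (L.Term A.carrier × L.Term A.carrier), (∀ y ∈ l, y ∈ DiagA) ∧
        SemCon V ({z | ∃ y ∈ l, z = (y.1.relabel Sum.inl, y.2.relabel Sum.inl)} ∪ {x | x ∈ γ'})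
          s t := by
    intro s t hst
    obtain ⟨R₀, hR₀R, hR₀fin, hsc0⟩ := semCon_compact hV hst
    refine ⟨(hR₀fin.toFinset).toList.filterMap
      (fun x => if hx : x ∈ DiagI then some (Classical.choose hx) else none), ?_, ?_⟩
    · intro y hy
      obtain ⟨x, hxl, hsome⟩ := List.mem_filterMap.1 hy
      by_cases hx : x ∈ DiagI
      · rw [dif_pos hx] at hsome
        obtain rfl := Option.some_injective _ hsome
        exact (Classical.choose_spec hx).1
      · rw [dif_neg hx] at hsome
        exact absurd hsome (by simp)
    · refine semCon_mono (fun x hx₀ => ?_) hsc0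
      rcases hR₀R hx₀ with hx | hx
      · refine Or.inl ⟨Classical.choose hx, ?_, ?_⟩
        · exact List.mem_filterMap.2
            ⟨x, Finset.mem_toList.2 (hR₀fin.mem_toFinset.2 hx₀), dif_pos hx⟩
        · have h2 := (Classical.choose_spec hx).2
          exact congrArg (fun pp : L.Term A.carrier × L.Term A.carrier =>
            (pp.1.relabel Sum.inl, pp.2.relabel Sum.inl)) rfl ▸ h2.symm
      · exact Or.inr hx
  -- injectivity of g0
  have hinj : Function.Injective g0 := by
    intro p q hpq
    have hsc : SemCon V R (Term.var (Sum.inl p)) (Term.var (Sum.inl q)) := (hker _ _).1 hpq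
    obtain ⟨π_d, hπdA, hsc1⟩ := hextract _ _ hsc
    obtain ⟨N, d, π'', hlen, hd, fwd, bwd⟩ := transfer π_d [a₁, a₂, b₁, b₂, p, q] (by simp)
    have h6 : (6 : ℕ) ≤ N := hlen
    let i0 : Fin N := ⟨0, by omega⟩
    let i1 : Fin N := ⟨1, by omega⟩
    let i2 : Fin N := ⟨2, by omega⟩
    let i3 : Fin N := ⟨3, by omega⟩
    let i4 : Fin N := ⟨4, by omega⟩
    let i5 : Fin N := ⟨5, by omega⟩
    have hd0 : d i0 = a₁ := hd 0 (by norm_num)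
    have hd1 : d i1 = a₂ := hd 1 (by norm_num)
    have hd2 : d i2 = b₁ := hd 2 (by norm_num)
    have hd3 : d i3 = b₂ := hd 3 (by norm_num)
    have hd4 : d i4 = p := hd 4 (by norm_num)
    have hd5 : d i5 = q := hd 5 (by norm_num)
    have hgdt2 := (hW N (Term.var i0) (Term.var i1) (Term.var i2) (Term.var i3) π'').2
      (Term.var i4, Term.var i5)
    have hLHS2 : ∀ C ∈ V, ∀ vv : Fin N → C.carrier, ∀ w' : Fin m → C.carrier,
        ConjHolds π'' vv →
        ConjHolds γ (Sum.elim ![(Term.var i0 : L.Term (Fin N)).realize vv,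
          (Term.var i1 : L.Term (Fin N)).realize vv, (Term.var i2 : L.Term (Fin N)).realize vv,
          (Term.var i3 : L.Term (Fin N)).realize vv] w') →
        EqHolds ((Term.var i4 : L.Term (Fin N)), (Term.var i5 : L.Term (Fin N))) vv := by
      intro C hC vv w' hπ hγ2
      obtain ⟨h, hhd, hhi⟩ := fwd C.carrier vv
        (fun ε hε => show ε.1.realize vv = ε.2.realize vv from hπ ε hε)
      set hh : A.carrier ⊕ Fin m → C.carrier := Sum.elim h w' with hhh
      have hhσ : hh ∘ σc = Sum.elim ![vv i0, vv i1, vv i2, vv i3] w' := by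
        funext x
        rcases x with j | k
        · show h (c j) = ![vv i0, vv i1, vv i2, vv i3] j
          fin_cases j
          · show h a₁ = vv i0
            rw [← hd0]; exact hhi i0
          · show h a₂ = vv i1
            rw [← hd1]; exact hhi i1
          · show h b₁ = vv i2
            rw [← hd2]; exact hhi i2
          · show h b₂ = vv i3
            rw [← hd3]; exact hhi i3
        · rfl
      have hprem : ∀ pp ∈ ({z | ∃ y ∈ π_d, z = (y.1.relabel Sum.inl, y.2.relabel Sum.inl)} ∪
          {x | x ∈ γ'} : Set _), pp.1.realize hh = pp.2.realize hh := by
        rintro pp hpp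
        rcases hpp with ⟨y, hy, rfl⟩ | hppγ
        · simp only [Term.realize_relabel]
          exact hhd y hy
        · obtain ⟨ε, hε, rfl⟩ := List.mem_map.1 hppγ
          simp only [Term.realize_relabel]
          rw [hhσ]
          exact hγ2 ε hε
      have hconc := hsc1 C hC hh hprem
      show vv i4 = vv i5
      rw [← hhi i4, ← hhi i5, hd4, hd5]
      exact hconc
    have hRHS2 := hgdt2.mp hLHS2
    have hππ : ConjHolds π'' d := by
      intro ε hε
      exact bwd A.carrier id (fun y hy => hπdA y hy) ε hε
    have h45 : d i4 = d i5 := hRHS2 A hA d hππ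
    rwa [hd4, hd5] at h45
  let g : A.carrier ↪[L] B.carrier := Embedding.ofInjective hinj
  have hgcoe : ∀ p, g p = ev (Term.var (Sum.inl p)) := fun p => rfl
  set w : Fin m → B.carrier := fun k => ev (Term.var (Sum.inr k)) with hw
  have hassign : (Sum.elim (fun i => g (c i)) w) = (fun x => ev (Term.var x)) ∘ σc := by
    funext x
    rcases x with j | k
    · exact hgcoe (c j)
    · rfl
  have hγB : ConjHolds γ (Sum.elim (fun i => g (c i)) w) := by
    intro ε hε
    show ε.1.realize (Sum.elim (fun i => g (c i)) w) = ε.2.realize (Sum.elim (fun i => g (c i)) w)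
    rw [hassign, ← Term.realize_relabel, ← Term.realize_relabel, hrt, hrt]
    exact (hker _ _).2 (semCon_of_mem (pp := (ε.1.relabel σc, ε.2.relabel σc))
      (Or.inr (show (ε.1.relabel σc, ε.2.relabel σc) ∈ γ' from by
        rw [hγ']; exact List.mem_map_of_mem hε)))
  have hφB := H B hB g w hγB
  have hφsem : ∀ ε ∈ fφ, SemCon V R (ε.1.relabel σc) (ε.2.relabel σc) := by
    intro ε hε
    refine (hker _ _).1 ?_
    have h0 : ε.1.realize (Sum.elim (fun i => g (c i)) w)
        = ε.2.realize (Sum.elim (fun i => g (c i)) w) := hφB ε hε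
    have e1 : ε.1.realize (Sum.elim (fun i => g (c i)) w) = ev (ε.1.relabel σc) := by
      rw [hassign, ← Term.realize_relabel, hrt]
    have e2 : ε.2.realize (Sum.elim (fun i => g (c i)) w) = ev (ε.2.relabel σc) := by
      rw [hassign, ← Term.realize_relabel, hrt]
    rw [← e1, ← e2]
    exact h0
  choose! ls hls1 hls2 using fun ε (hε : ε ∈ fφ) => hextract _ _ (hφsem ε hε)
  set allπ : List (L.Term A.carrier × L.Term A.carrier) :=
    fφ.attach.flatMap (fun x => ls x.1) with hallπ
  have hallπA : ∀ y ∈ allπ, y ∈ DiagA := by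
    intro y hy
    obtain ⟨x, _, hyx⟩ := List.mem_flatMap.1 hy
    exact hls1 x.1 x.2 y hyx
  have hφsem2 : ∀ ε ∈ fφ, SemCon V
      ({z | ∃ y ∈ allπ, z = (y.1.relabel Sum.inl, y.2.relabel Sum.inl)} ∪ {x | x ∈ γ'})
      (ε.1.relabel σc) (ε.2.relabel σc) := by
    intro ε hε
    refine semCon_mono (fun z hz => ?_) (hls2 ε hε)
    rcases hz with ⟨y, hy, rfl⟩ | hz
    · exact Or.inl ⟨y, List.mem_flatMap.2 ⟨⟨ε, hε⟩, List.mem_attach _ _, hy⟩, rfl⟩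
    · exact Or.inr hz
  obtain ⟨N, d, π'', hlen, hd, fwd, bwd⟩ := transfer allπ [a₁, a₂, b₁, b₂] (by simp)
  have h4 : (4 : ℕ) ≤ N := hlen
  let i0 : Fin N := ⟨0, by omega⟩
  let i1 : Fin N := ⟨1, by omega⟩
  let i2 : Fin N := ⟨2, by omega⟩
  let i3 : Fin N := ⟨3, by omega⟩
  have hd0 : d i0 = a₁ := hd 0 (by norm_num)
  have hd1 : d i1 = a₂ := hd 1 (by norm_num)
  have hd2 : d i2 = b₁ := hd 2 (by norm_num)
  have hd3 : d i3 = b₂ := hd 3 (by norm_num)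
  have hgdt := hW N (Term.var i0) (Term.var i1) (Term.var i2) (Term.var i3) π''
  have hRHS : ∀ C ∈ V, ∀ vv : Fin N → C.carrier, ConjHolds π'' vv →
      ∀ w' : Fin m → C.carrier,
      ConjHolds γ (Sum.elim ![(Term.var i0 : L.Term (Fin N)).realize vv,
        (Term.var i1 : L.Term (Fin N)).realize vv, (Term.var i2 : L.Term (Fin N)).realize vv,
        (Term.var i3 : L.Term (Fin N)).realize vv] w') →
      ConjHolds fφ (Sum.elim ![(Term.var i0 : L.Term (Fin N)).realize vv,
        (Term.var i1 : L.Term (Fin N)).realize vv, (Term.var i2 : L.Term (Fin N)).realize vv,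
        (Term.var i3 : L.Term (Fin N)).realize vv] w') := by
    intro C hC vv hπ w' hγ2
    obtain ⟨h, hhd, hhi⟩ := fwd C.carrier vv
      (fun ε hε => show ε.1.realize vv = ε.2.realize vv from hπ ε hε)
    set hh : A.carrier ⊕ Fin m → C.carrier := Sum.elim h w' with hhh
    have hhσ : hh ∘ σc = Sum.elim ![vv i0, vv i1, vv i2, vv i3] w' := by
      funext x
      rcases x with j | k
      · show h (c j) = ![vv i0, vv i1, vv i2, vv i3] j
        fin_cases j
        · show h a₁ = vv i0
          rw [← hd0]; exact hhi i0
        · show h a₂ = vv i1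
          rw [← hd1]; exact hhi i1
        · show h b₁ = vv i2
          rw [← hd2]; exact hhi i2
        · show h b₂ = vv i3
          rw [← hd3]; exact hhi i3
      · rfl
    have hprem : ∀ pp ∈ ({z | ∃ y ∈ allπ, z = (y.1.relabel Sum.inl, y.2.relabel Sum.inl)} ∪
        {x | x ∈ γ'} : Set _), pp.1.realize hh = pp.2.realize hh := by
      rintro pp hpp
      rcases hpp with ⟨y, hy, rfl⟩ | hppγ
      · simp only [Term.realize_relabel]
        exact hhd y hy
      · obtain ⟨ε, hε, rfl⟩ := List.mem_map.1 hppγ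
        simp only [Term.realize_relabel]
        rw [hhσ]
        exact hγ2 ε hε
    intro ε hε
    have hconc := hφsem2 ε hε C hC hh hprem
    rw [Term.realize_relabel, Term.realize_relabel, hhσ] at hconc
    exact hconc
  have hLHS := hgdt.1.mpr hRHS
  intro θ hθb
  have hbb : θ.rel b₁ b₂ := hθb (b₁, b₂) rfl
  have hππ : ConjHolds π'' (fun i => Quotient.mk θ.setoid (d i)) := by
    intro ε hε
    refine bwd (QuotAlg θ) (fun x => Quotient.mk θ.setoid x) ?_ ε hε
    intro y hy
    have h1 : y.1.realize (fun x => Quotient.mk θ.setoid (id x))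
        = Quotient.mk θ.setoid (y.1.realize id) := realize_quot_mk θ y.1 id
    have h2 : y.2.realize (fun x => Quotient.mk θ.setoid (id x))
        = Quotient.mk θ.setoid (y.2.realize id) := realize_quot_mk θ y.2 id
    show y.1.realize (fun x => Quotient.mk θ.setoid x) = y.2.realize (fun x => Quotient.mk θ.setoid x)
    rw [show (fun x : A.carrier => Quotient.mk θ.setoid x)
        = (fun x : A.carrier => Quotient.mk θ.setoid (id x)) from rfl, h1, h2, hallπA y hy]
  have := hLHS (Alg.mk (QuotAlg θ)) (quotAlg_mem hV hA θ) (fun i => Quotient.mk θ.setoid (d i))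
    hππ ?_
  · have h1 : (Term.var i0 : L.Term (Fin N)).realize (fun i => Quotient.mk θ.setoid (d i))
        = Quotient.mk θ.setoid a₁ := by rw [show ((Term.var i0 : L.Term (Fin N)).realize
          (fun i => Quotient.mk θ.setoid (d i))) = Quotient.mk θ.setoid (d i0) from rfl, hd0]
    have h2 : (Term.var i1 : L.Term (Fin N)).realize (fun i => Quotient.mk θ.setoid (d i))
        = Quotient.mk θ.setoid a₂ := by rw [show ((Term.var i1 : L.Term (Fin N)).realize
          (fun i => Quotient.mk θ.setoid (d i))) = Quotient.mk θ.setoid (d i1) from rfl, hd1]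
    rw [h1, h2] at this
    exact @Quotient.exact _ θ.setoid _ _ this
  · show Quotient.mk θ.setoid (d i2) = Quotient.mk θ.setoid (d i3)
    rw [hd2, hd3]
    exact Quotient.sound hbb

end Aux

/-- Proposition 5.7. Let `V` be a variety of algebras over an algebraic
first-order language `L` that has the congruence extension property and a guarded deduction
theorem. Then `V` has parametrically definable principal congruences. -/
theorem pdpc_of_guardedDT
    (L : FirstOrder.Language.{u, u}) [L.IsAlgebraic] (hc : Nonempty L.Constants)
    (V : Set (Alg L)) (hV : IsVariety V) (hCEP : CongExtension V) (hGDT : GuardedDT V) :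
    PDPC V := by
  obtain ⟨m, γ, fφ, hW⟩ := hGDT
  refine ⟨m, (conjForm γ).imp (conjForm fφ), (conjForm_isQF γ).imp (conjForm_isQF fφ), ?_⟩
  intro A hA a₁ a₂ b₁ b₂
  have hvec : ∀ {B : Type u} [L.Structure B] (g : A.carrier ↪[L] B),
      (fun i : Fin 4 => g (![a₁, a₂, b₁, b₂] i)) = ![g a₁, g a₂, g b₁, g b₂] := by
    intro B _ g
    funext j
    fin_cases j <;> rfl
  constructor
  · intro hrel B hB g w
    rw [Formula.realize_imp, conjForm_realize, conjForm_realize]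
    intro hγ
    rw [hvec g] at hγ ⊢
    exact key_fwd hV hW hB (g a₁) (g a₂) (g b₁) (g b₂) (principalCong_map g hrel) w hγ
  · intro H
    refine key_bwd hV hW hA a₁ a₂ b₁ b₂ ?_
    intro B hB g w hγ
    have := H B hB g w
    rw [Formula.realize_imp, conjForm_realize, conjForm_realize] at this
    exact this hγ

end Paper
end
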